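/- arXiv:math/0703429 — 7 statements merged into one kernel-verified Lean document; each statement's English description precedes it below -/
import Mathlib

section
/- Let X and Y be compact LOTSes and let f : X → Y be a continuous order-preserving map (x₁ < x₂ implies f(x₁) ≤ f(x₂)). Then f is tight. -/
open Set Topology

universe u

section Defs

variable {X Y K Z : Type*}

/-- A subset `S` of a topological space is *scattered* iff every nonempty subset `T ⊆ S`
has a point which is isolated in the subspace topology of `T`. -/
def IsScatteredSet [TopologicalSpace X] (S : Set X) : Prop :=
  ∀ T ⊆ S, T.Nonempty → ∃ x ∈ T, ∃ U : Set X, IsOpen U ∧ U ∩ T = {x}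

/-- A *loose family* for `f : X → Y` : a pairwise disjoint family `Ps` of closed subsets of `X`
such that for some non-scattered `Q ⊆ Y`, `f '' P = Q` for all `P ∈ Ps`. -/
def LooseFamily [TopologicalSpace X] [TopologicalSpace Y] (f : X → Y)
    (Ps : Set (Set X)) : Prop :=
  Ps.Pairwise Disjoint ∧ (∀ P ∈ Ps, IsClosed P) ∧
    ∃ Q : Set Y, ¬ IsScatteredSet Q ∧ ∀ P ∈ Ps, f '' P = Q

/-- `f` is `κ`-*tight* iff there is no loose family for `f` of cardinality `κ`. -/
def IsTightCard [TopologicalSpace X] [TopologicalSpace Y] (κ : Cardinal) (f : X → Y) : Prop :=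
  ¬ ∃ Ps : Set (Set X), LooseFamily f Ps ∧ Cardinal.mk Ps = κ

/-- `f` is *tight* iff it is `2`-tight. -/
def IsTight [TopologicalSpace X] [TopologicalSpace Y] (f : X → Y) : Prop :=
  IsTightCard 2 f

/-- A `K`-*loose function* for `f : X → Y` : a continuous `φ : D → K` with `D` closed in `X`,
such that for some non-scattered `Q ⊆ Y`, `φ(f⁻¹{y} ∩ D) = K` for all `y ∈ Q`. -/
def LooseFunction [TopologicalSpace X] [TopologicalSpace Y] [TopologicalSpace K]
    (f : X → Y) (D : Set X) (φ : X → K) : Prop :=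
  IsClosed D ∧ ContinuousOn φ D ∧
    ∃ Q : Set Y, ¬ IsScatteredSet Q ∧ ∀ y ∈ Q, φ '' (f ⁻¹' {y} ∩ D) = Set.univ

/-- `f` is *weakly c-tight* iff there is no `K`-loose function for `f`
with `K` the Cantor space `2^ω`. -/
def WeaklyCTight [TopologicalSpace X] [TopologicalSpace Y] (f : X → Y) : Prop :=
  ¬ ∃ (D : Set X) (φ : X → (ℕ → Bool)), LooseFunction f D φ

/-- `f` is *finer* than `g` iff `f x₁ = f x₂` implies `g x₁ = g x₂`. -/
def Finer (f : X → Y) (g : X → Z) : Prop :=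
  ∀ x₁ x₂ : X, f x₁ = f x₂ → g x₁ = g x₂

end Defs

/-- `X` is `κ`-*dissipated* iff every continuous map from `X` to a compact metrizable
space is refined by a `κ`-tight continuous map from `X` to a compact metrizable space. -/
def IsDissipatedCard (κ : Cardinal.{u}) (X : Type u) [TopologicalSpace X] : Prop :=
  ∀ (Z : Type u) [TopologicalSpace Z] [CompactSpace Z] [TopologicalSpace.MetrizableSpace Z],
    ∀ g : X → Z, Continuous g →
      ∃ (Y : Type u) (tY : TopologicalSpace Y),
        @CompactSpace Y tY ∧ @TopologicalSpace.MetrizableSpace Y tY ∧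
        ∃ f : X → Y, @Continuous X Y _ tY f ∧ @IsTightCard X Y _ tY κ f ∧ Finer f g

/-- `X` is *weakly c-dissipated* iff every continuous map from `X` to a compact metrizable
space is refined by a weakly c-tight continuous map from `X` to a compact metrizable space. -/
def IsWeaklyCDissipated (X : Type u) [TopologicalSpace X] : Prop :=
  ∀ (Z : Type u) [TopologicalSpace Z] [CompactSpace Z] [TopologicalSpace.MetrizableSpace Z],
    ∀ g : X → Z, Continuous g →
      ∃ (Y : Type u) (tY : TopologicalSpace Y),
        @CompactSpace Y tY ∧ @TopologicalSpace.MetrizableSpace Y tY ∧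
        ∃ f : X → Y, @Continuous X Y _ tY f ∧ @WeaklyCTight X Y _ tY f ∧ Finer f g

private lemma aux0 {X Y : Type*}
    [LinearOrder X] [TopologicalSpace X] [OrderTopology X] [CompactSpace X]
    [LinearOrder Y] [TopologicalSpace Y] [OrderTopology Y] [CompactSpace Y]
    (f : X → Y) (hf : Continuous f)
    (hmono : ∀ x₁ x₂ : X, x₁ < x₂ → f x₁ ≤ f x₂)
    (P : Set X) (hP : IsClosed P) (y : Y) (b : X) (hb : f b = y)
    (hub : ∀ x ∈ P, f x = y → x < b)
    (hcl : y ∈ closure ((f '' P) ∩ Set.Ioi y)) : False := by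
  have hC : IsClosed (P ∩ Set.Ici b) := hP.inter isClosed_Ici
  have himgcl : IsClosed (f '' (P ∩ Set.Ici b)) := (hC.isCompact.image hf).isClosed
  have hsub : (f '' P) ∩ Set.Ioi y ⊆ f '' (P ∩ Set.Ici b) := by
    rintro z ⟨⟨x, hxP, rfl⟩, hz⟩
    refine ⟨x, ⟨hxP, ?_⟩, rfl⟩
    by_contra h
    rw [Set.mem_Ici, not_le] at h
    exact absurd (hmono x b h) (by rw [hb]; exact not_le.mpr hz)
  have hy : y ∈ f '' (P ∩ Set.Ici b) :=
    himgcl.closure_eq ▸ closure_mono hsub hcl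
  obtain ⟨x, ⟨hxP, hxb⟩, hfx⟩ := hy
  exact absurd hxb (not_le.mpr (hub x hxP hfx))

private lemma aux {X Y : Type*}
    [LinearOrder X] [TopologicalSpace X] [OrderTopology X] [CompactSpace X]
    [LinearOrder Y] [TopologicalSpace Y] [OrderTopology Y] [CompactSpace Y]
    (f : X → Y) (hf : Continuous f)
    (hmono : ∀ x₁ x₂ : X, x₁ < x₂ → f x₁ ≤ f x₂)
    (P₀ P₁ : Set X) (h0 : IsClosed P₀) (h1 : IsClosed P₁) (hd : Disjoint P₀ P₁)
    (y : Y) (hy0 : y ∈ f '' P₀) (hy1 : y ∈ f '' P₁)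
    (hcl : y ∈ closure ((f '' P₀ ∩ f '' P₁) ∩ Set.Ioi y)) : False := by
  have hfib : IsClosed (f ⁻¹' {y}) := isClosed_singleton.preimage hf
  obtain ⟨x0, hx0P, hx0f⟩ := hy0
  obtain ⟨x1, hx1P, hx1f⟩ := hy1
  obtain ⟨M0, hM0, hM0ub⟩ :=
    (h0.inter hfib).isCompact.exists_isGreatest ⟨x0, hx0P, hx0f⟩
  obtain ⟨M1, hM1, hM1ub⟩ :=
    (h1.inter hfib).isCompact.exists_isGreatest ⟨x1, hx1P, hx1f⟩
  have hne : M0 ≠ M1 := fun h => Set.disjoint_left.mp hd hM0.1 (h ▸ hM1.1)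
  rcases hne.lt_or_gt with hlt | hlt
  · have hs : (f '' P₀ ∩ f '' P₁) ∩ Set.Ioi y ⊆ f '' P₀ ∩ Set.Ioi y :=
      fun z hz => ⟨hz.1.1, hz.2⟩
    exact aux0 f hf hmono P₀ h0 y M1 hM1.2
      (fun x hx hfx => lt_of_le_of_lt (hM0ub ⟨hx, hfx⟩) hlt)
      (closure_mono hs hcl)
  · have hs : (f '' P₀ ∩ f '' P₁) ∩ Set.Ioi y ⊆ f '' P₁ ∩ Set.Ioi y :=
      fun z hz => ⟨hz.1.2, hz.2⟩
    exact aux0 f hf hmono P₁ h1 y M0 hM0.2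
      (fun x hx hfx => lt_of_le_of_lt (hM1ub ⟨hx, hfx⟩) hlt)
      (closure_mono hs hcl)

/-- If `X, Y` are compact LOTSes and `f : X → Y` is continuous and order-preserving,
then `f` is tight. -/
theorem stmt0 {X Y : Type*}
    [LinearOrder X] [TopologicalSpace X] [OrderTopology X] [CompactSpace X]
    [LinearOrder Y] [TopologicalSpace Y] [OrderTopology Y] [CompactSpace Y]
    (f : X → Y) (hf : Continuous f)
    (hmono : ∀ x₁ x₂ : X, x₁ < x₂ → f x₁ ≤ f x₂) :
    IsTight f := by
  rintro ⟨Ps, ⟨hdisj, hclosed, Q, hQ, himg⟩, hcard⟩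
  rw [Cardinal.mk_eq_two_iff] at hcard
  obtain ⟨⟨P₀, hP₀⟩, ⟨P₁, hP₁⟩, hne, -⟩ := hcard
  have hne' : P₀ ≠ P₁ := fun h => hne (by simpa using h)
  have hd : Disjoint P₀ P₁ := hdisj hP₀ hP₁ hne'
  rw [IsScatteredSet] at hQ
  push_neg at hQ
  obtain ⟨T, hTQ, hTne, hiso⟩ := hQ
  obtain ⟨y, hyT⟩ := hTne
  have hyc : y ∈ closure (T \ {y}) := by
    rw [mem_closure_iff]
    intro U hU hyU
    by_contra h
    apply hiso y hyT U hU
    refine Set.eq_singleton_iff_unique_mem.mpr ⟨⟨hyU, hyT⟩, fun z hz => ?_⟩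
    by_contra hzy
    exact h ⟨z, hz.1, hz.2, hzy⟩
  have hsplit : T \ {y} = (T ∩ Set.Iio y) ∪ (T ∩ Set.Ioi y) := by
    ext z
    constructor
    · rintro ⟨hzT, hzy⟩
      rcases lt_or_gt_of_ne (fun h => hzy h) with h | h
      · exact Or.inl ⟨hzT, h⟩
      · exact Or.inr ⟨hzT, h⟩
    · rintro (⟨hzT, h⟩ | ⟨hzT, h⟩)
      · exact ⟨hzT, ne_of_lt h⟩
      · exact ⟨hzT, ne_of_gt h⟩
  rw [hsplit, closure_union] at hyc
  have hyQ : y ∈ Q := hTQ hyT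
  have hy0 : y ∈ f '' P₀ := (himg P₀ hP₀).symm ▸ hyQ
  have hy1 : y ∈ f '' P₁ := (himg P₁ hP₁).symm ▸ hyQ
  have hTsub : ∀ z ∈ T, z ∈ f '' P₀ ∩ f '' P₁ := fun z hz =>
    ⟨(himg P₀ hP₀).symm ▸ hTQ hz, (himg P₁ hP₁).symm ▸ hTQ hz⟩
  rcases hyc with hyc | hyc
  · -- left-limit case: use order duals
    haveI : CompactSpace Xᵒᵈ := ‹CompactSpace X›
    haveI : CompactSpace Yᵒᵈ := ‹CompactSpace Y›
    have hs : T ∩ Set.Iio y ⊆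
        ((f '' P₀ ∩ f '' P₁) ∩ @Set.Ioi Yᵒᵈ _ (OrderDual.toDual y) : Set Yᵒᵈ) :=
      fun z hz => ⟨hTsub z hz.1, hz.2⟩
    exact aux (X := Xᵒᵈ) (Y := Yᵒᵈ) f hf (fun x₁ x₂ h => hmono x₂ x₁ h)
      P₀ P₁ (hclosed P₀ hP₀) (hclosed P₁ hP₁) hd y hy0 hy1
      (closure_mono hs hyc)
  · have hs : T ∩ Set.Ioi y ⊆ (f '' P₀ ∩ f '' P₁) ∩ Set.Ioi y :=
      fun z hz => ⟨hTsub z hz.1, hz.2⟩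
    exact aux f hf hmono P₀ P₁ (hclosed P₀ hP₀) (hclosed P₁ hP₁) hd y hy0 hy1
      (closure_mono hs hyc)
end

section
/- Let X, Y, Z be compact metrizable spaces and f : X → Y continuous, and suppose that there are uncountably many y ∈ Y such that f⁻¹{y} contains a homeomorphic copy of Z. Then there exist a perfect subset Q of Y (i.e., Q is nonempty, closed in Y, and has no isolated points) and an injective continuous map i : Q × Z → X such that f(i(q,u)) = q for all (q,u) ∈ Q × Z. -/
open Set Topology

universe u

/-!
Encode an embedded copy of `Z` in the fibre over `y` as a point `(y, e, μ)` of the Polish space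
`Y × C(Z, X) × (ℕ → ℕ)`, where `f ∘ e` is constantly `y` and `μ` is a modulus of injectivity of
`e`: points of `Z` at distance `≥ 1/(n+1)` are sent to points at distance `≥ 1/(μ n + 1)`.
Injectivity alone is not a closed condition on `e`, but together with a modulus it is, so these
triples form a closed, hence Polish, set `T` whose projection to `Y` is uncountable.

A Cantor scheme in `T` whose pieces have uncountable projections, vanishing diameters, and
sibling projections with disjoint closures (an uncountable projection always has two
condensation points with distinct images, which can be separated) yields a continuous
`g : 2^ℕ → T` with `fst ∘ g` injective. The range `Q` of `fst ∘ g` is a homeomorphic copy of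
the Cantor space, hence perfect, and `i (q, u) = e u`, for the triple `(q, e, μ)` of `g` lying
over `q`, is the required map.
-/

open Filter Function
open scoped ENNReal

section CondensationScheme

variable {P W : Type*}

theorem countable_image_setOf_exists_nhds_countable_image [TopologicalSpace P]
    [SecondCountableTopology P] (π : P → W) (R : Set P) :
    (π '' {p ∈ R | ∃ U ∈ 𝓝 p, (π '' (U ∩ R)).Countable}).Countable := by
  choose! U hU hUc using fun p (hp : p ∈ {p ∈ R | ∃ U ∈ 𝓝 p, (π '' (U ∩ R)).Countable}) => hp.2
  obtain ⟨t, ht, htc, hcover⟩ :=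
    TopologicalSpace.countable_cover_nhdsWithin fun p hp => mem_nhdsWithin_of_mem_nhds (hU p hp)
  refine (htc.biUnion fun q hq => hUc q (ht hq)).mono ?_
  rintro _ ⟨p, hp, rfl⟩
  obtain ⟨q, hq, hpq⟩ := mem_iUnion₂.1 (hcover hp)
  exact mem_iUnion₂.2 ⟨q, hq, p, ⟨hpq, hp.1⟩, rfl⟩

theorem exists_image_ne_of_not_countable_image [TopologicalSpace P] [SecondCountableTopology P]
    (π : P → W) {R : Set P} (hR : ¬ (π '' R).Countable) :
    ∃ p₀ p₁, π p₀ ≠ π p₁ ∧ (∀ U ∈ 𝓝 p₀, ¬ (π '' (U ∩ R)).Countable) ∧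
      ∀ U ∈ 𝓝 p₁, ¬ (π '' (U ∩ R)).Countable := by
  set C := {p ∈ R | ∀ U ∈ 𝓝 p, ¬ (π '' (U ∩ R)).Countable}
  have hC : ¬ (π '' C).Countable := by
    intro hCc
    refine hR ((hCc.union (countable_image_setOf_exists_nhds_countable_image π R)).mono ?_)
    rintro _ ⟨p, hp, rfl⟩
    by_cases hpC : ∀ U ∈ 𝓝 p, ¬ (π '' (U ∩ R)).Countable
    · exact Or.inl ⟨p, ⟨hp, hpC⟩, rfl⟩
    · push Not at hpC
      exact Or.inr ⟨p, ⟨hp, hpC⟩, rfl⟩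
  obtain ⟨_, ⟨p₀, hp₀, rfl⟩, _, ⟨p₁, hp₁, rfl⟩, hne⟩ :=
    not_subsingleton_iff.1 fun hs => hC hs.countable
  exact ⟨p₀, p₁, hne, hp₀.2, hp₁.2⟩

theorem exists_subset_ediam_le_image_subset [MetricSpace P] [TopologicalSpace W] {π : P → W}
    (hπ : Continuous π) {R : Set P} {p : P} (hp : ∀ U ∈ 𝓝 p, ¬ (π '' (U ∩ R)).Countable)
    {u : Set W} (hu : u ∈ 𝓝 (π p)) {ε : ℝ≥0∞} (hε : 0 < ε) :
    ∃ R' ⊆ R, ¬ (π '' R').Countable ∧ Metric.ediam R' ≤ ε ∧ π '' R' ⊆ u := by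
  refine ⟨(Metric.eball p (ε / 2) ∩ π ⁻¹' u) ∩ R, inter_subset_right, hp _ ?_, ?_,
    image_subset_iff.2 fun q hq => hq.1.2⟩
  · exact inter_mem (Metric.eball_mem_nhds p (ENNReal.half_pos hε.ne'))
      (hπ.continuousAt.preimage_mem_nhds hu)
  · calc Metric.ediam ((Metric.eball p (ε / 2) ∩ π ⁻¹' u) ∩ R)
        ≤ Metric.ediam (Metric.eball p (ε / 2)) :=
          Metric.ediam_mono (inter_subset_left.trans inter_subset_left)
      _ ≤ 2 * (ε / 2) := Metric.ediam_eball_le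
      _ = ε := ENNReal.mul_div_cancel' (by norm_num) (by norm_num)

variable [MetricSpace P] [SecondCountableTopology P] [TopologicalSpace W] [T25Space W] {π : P → W}

theorem exists_split_of_not_countable_image (hπ : Continuous π) {R : Set P}
    (hR : ¬ (π '' R).Countable) {ε : ℝ≥0∞} (hε : 0 < ε) :
    ∃ R₀ R₁ : Set P, (R₀ ⊆ R ∧ ¬ (π '' R₀).Countable ∧ Metric.ediam R₀ ≤ ε) ∧
      (R₁ ⊆ R ∧ ¬ (π '' R₁).Countable ∧ Metric.ediam R₁ ≤ ε) ∧
      Disjoint (closure (π '' R₀)) (closure (π '' R₁)) := by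
  obtain ⟨p₀, p₁, hne, h₀, h₁⟩ := exists_image_ne_of_not_countable_image π hR
  obtain ⟨u₀, hu₀, u₁, hu₁, hdisj⟩ := exists_nhds_disjoint_closure hne
  obtain ⟨R₀, hR₀, hunc₀, hdiam₀, hsub₀⟩ := exists_subset_ediam_le_image_subset hπ h₀ hu₀ hε
  obtain ⟨R₁, hR₁, hunc₁, hdiam₁, hsub₁⟩ := exists_subset_ediam_le_image_subset hπ h₁ hu₁ hε
  exact ⟨R₀, R₁, ⟨hR₀, hunc₀, hdiam₀⟩, ⟨hR₁, hunc₁, hdiam₁⟩,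
    hdisj.mono (closure_mono hsub₀) (closure_mono hsub₁)⟩

theorem exists_scheme_of_not_countable_range (hπ : Continuous π) (hrange : ¬ (range π).Countable)
    {u : ℕ → ℝ≥0∞} (hu : ∀ n, 0 < u n) :
    ∃ D : List Bool → Set P, (∀ l, ¬ (π '' D l).Countable) ∧ CantorScheme.Antitone D ∧
      (∀ l a, Metric.ediam (D (a :: l)) ≤ u l.length) ∧
      ∀ l a b, a ≠ b → Disjoint (closure (π '' D (a :: l))) (closure (π '' D (b :: l))) := by
  choose R₀ R₁ h₀ h₁ hdisj using fun (R : {R : Set P // ¬ (π '' R).Countable}) (n : ℕ) =>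
    exists_split_of_not_countable_image hπ R.2 (hu n)
  let child (R : {R : Set P // ¬ (π '' R).Countable}) (n : ℕ) (a : Bool) :
      {R : Set P // ¬ (π '' R).Countable} :=
    cond a ⟨R₁ R n, (h₁ R n).2.1⟩ ⟨R₀ R n, (h₀ R n).2.1⟩
  let D (l : List Bool) : {R : Set P // ¬ (π '' R).Countable} :=
    l.rec ⟨univ, by rwa [image_univ]⟩ fun a l R => child R l.length a
  refine ⟨fun l => (D l).1, fun l => (D l).2, ?_, ?_, ?_⟩
  · rintro l (_ | _)
    exacts [(h₀ _ _).1, (h₁ _ _).1]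
  · rintro l (_ | _)
    exacts [(h₀ _ _).2.2, (h₁ _ _).2.2]
  · rintro l (_ | _) (_ | _) hab
    exacts [absurd rfl hab, hdisj _ _, (hdisj _ _).symm, absurd rfl hab]

end CondensationScheme

open CantorScheme PiNat in
theorem exists_continuous_injective_comp_of_not_countable_range {P W : Type*} [TopologicalSpace P]
    [PolishSpace P] [TopologicalSpace W] [T25Space W] {π : P → W} (hπ : Continuous π)
    (hrange : ¬ (range π).Countable) :
    ∃ g : (ℕ → Bool) → P, Continuous g ∧ Injective (π ∘ g) := by
  let := TopologicalSpace.upgradeIsCompletelyMetrizable P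
  obtain ⟨u, -, hu_pos, hu⟩ := exists_seq_strictAnti_tendsto' (zero_lt_one' ℝ≥0∞)
  obtain ⟨D, hDunc, hDanti, hDdiam, hDdisj⟩ :=
    exists_scheme_of_not_countable_range hπ hrange fun n => (hu_pos n).1
  let A l := closure (D l)
  have hanti : ClosureAntitone A :=
    Antitone.closureAntitone (fun l a => closure_mono (hDanti l a)) fun _ => isClosed_closure
  have hdiam : VanishingDiam A := by
    intro x
    refine (tendsto_add_atTop_iff_nat 1).1 <| tendsto_of_tendsto_of_tendsto_of_le_of_le
      tendsto_const_nhds hu (fun _ => bot_le) fun n => ?_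
    simpa [A, Metric.ediam_closure] using hDdiam (res x n) (x n)
  have hdom : ∀ x, x ∈ (inducedMap A).1 := by
    rw [hanti.map_of_vanishingDiam hdiam fun l => closure_nonempty_iff.2
      (not_subsingleton_iff.1 fun h => hDunc l h.countable).nonempty.of_image]
    exact mem_univ
  let g x := (inducedMap A).2 ⟨x, hdom x⟩
  refine ⟨g, hdiam.map_continuous.comp (by fun_prop), fun x y (hxy : π (g x) = π (g y)) => ?_⟩
  by_contra hne
  set n := firstDiff x y
  have mem (z) : π (g z) ∈ closure (π '' D (z n :: res z n)) :=
    image_closure_subset_closure_image hπ (mem_image_of_mem π (map_mem ⟨z, hdom z⟩ (n + 1)))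
  have hres : res y n = res x n := res_eq_res.2 fun m hm => (apply_eq_of_lt_firstDiff hm).symm
  have hy := mem y
  rw [hres, ← hxy] at hy
  exact disjoint_left.1 (hDdisj _ _ _ (apply_firstDiff_ne hne)) (mem x) hy

instance Pi.perfectSpace {ι : Type*} [Infinite ι] {E : ι → Type*} [∀ i, TopologicalSpace (E i)]
    [∀ i, Nontrivial (E i)] : PerfectSpace (∀ i, E i) := by
  classical
  refine ⟨preperfect_iff_nhds.2 fun x _ U hU => ?_⟩
  choose y hy using fun i => exists_ne (x i)
  have hlim : Tendsto (fun i => update x i (y i)) cofinite (𝓝 x) := by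
    refine tendsto_pi_nhds.2 fun j => tendsto_const_nhds.congr' ?_
    filter_upwards [(finite_singleton j).eventually_cofinite_notMem] with i hij
    exact (update_of_ne (Ne.symm hij) _ _).symm
  obtain ⟨i, hi⟩ := (hlim.eventually_mem hU).exists
  exact ⟨_, ⟨hi, mem_univ _⟩, fun h => hy i (by simpa using congrFun h i)⟩

theorem perfect_range_of_continuous_injective {K W : Type*} [TopologicalSpace K] [CompactSpace K]
    [PerfectSpace K] [TopologicalSpace W] [T2Space W] {e : K → W} (he : Continuous e)
    (hinj : Injective e) : Perfect (range e) := by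
  refine ⟨(isCompact_range he).isClosed, ?_⟩
  rintro _ ⟨x, rfl⟩
  simpa [map_principal, image_univ] using
    (PerfectSpace.univ_preperfect x (mem_univ x)).map he.continuousAt hinj

theorem exists_perfect_continuous_section {P W : Type*} [TopologicalSpace P] [PolishSpace P]
    [TopologicalSpace W] [T25Space W] {π : P → W} (hπ : Continuous π)
    (hrange : ¬ (range π).Countable) :
    ∃ Q : Set W, Perfect Q ∧ Q.Nonempty ∧ ∃ s : Q → P, Continuous s ∧ ∀ q, π (s q) = q := by
  obtain ⟨g, hg, hinj⟩ := exists_continuous_injective_comp_of_not_countable_range hπ hrange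
  have hemb := ((hπ.comp hg).isClosedEmbedding hinj).isEmbedding
  refine ⟨range (π ∘ g), perfect_range_of_continuous_injective (hπ.comp hg) hinj,
    range_nonempty _, g ∘ hemb.toHomeomorph.symm, hg.comp hemb.toHomeomorph.symm.continuous,
    fun q => ?_⟩
  exact congrArg Subtype.val (hemb.toHomeomorph.apply_symm_apply q)

def IsInjectivityModulus {Z X : Type*} [PseudoMetricSpace Z] [PseudoMetricSpace X]
    (e : Z → X) (μ : ℕ → ℕ) : Prop :=
  ∀ (n : ℕ) (z z' : Z), 1 / ((n : ℝ) + 1) ≤ dist z z' → 1 / ((μ n : ℝ) + 1) ≤ dist (e z) (e z')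

theorem IsInjectivityModulus.injective {Z X : Type*} [MetricSpace Z] [PseudoMetricSpace X]
    {e : Z → X} {μ : ℕ → ℕ} (hμ : IsInjectivityModulus e μ) : Injective e := by
  intro z z' hzz'
  by_contra hne
  obtain ⟨n, hn⟩ := exists_nat_one_div_lt (dist_pos.2 hne)
  have := hμ n z z' hn.le
  rw [hzz', dist_self] at this
  exact this.not_gt (by positivity)

theorem Function.Injective.exists_isInjectivityModulus {Z X : Type*} [PseudoMetricSpace Z]
    [CompactSpace Z] [MetricSpace X] {e : Z → X} (he : Continuous e) (hinj : Injective e) :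
    ∃ μ, IsInjectivityModulus e μ := by
  have (n : ℕ) : ∃ m : ℕ, ∀ z z', 1 / ((n : ℝ) + 1) ≤ dist z z' →
      1 / ((m : ℝ) + 1) ≤ dist (e z) (e z') := by
    let K : Set (Z × Z) := {q | 1 / ((n : ℝ) + 1) ≤ dist q.1 q.2}
    have hK : IsCompact K := (isClosed_le continuous_const continuous_dist).isCompact
    have hpos : ∀ q ∈ K, 0 < dist (e q.1) (e q.2) := by
      intro q (hq : _ ≤ dist q.1 q.2)
      refine dist_pos.2 fun h => ?_
      rw [hinj h, dist_self] at hq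
      exact hq.not_gt (by positivity)
    obtain ⟨δ, hδ, hδle⟩ := hK.exists_forall_le' (by fun_prop : Continuous fun q : Z × Z =>
      dist (e q.1) (e q.2)).continuousOn hpos
    obtain ⟨m, hm⟩ := exists_nat_one_div_lt hδ
    exact ⟨m, fun z z' h => hm.le.trans (hδle (z, z') h)⟩
  choose μ hμ using this
  exact ⟨μ, hμ⟩

theorem isClosed_setOf_isInjectivityModulus {Z X : Type*} [PseudoMetricSpace Z]
    [PseudoMetricSpace X] : IsClosed {p : C(Z, X) × (ℕ → ℕ) | IsInjectivityModulus p.1 p.2} := by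
  simp only [IsInjectivityModulus, ofPred_forall]
  refine isClosed_iInter fun n => isClosed_iInter fun z => isClosed_iInter fun z' =>
    isClosed_iInter fun _ => isClosed_le ?_ (by fun_prop)
  exact (continuous_of_discreteTopology (f := fun m : ℕ => 1 / ((m : ℝ) + 1))).comp
    ((continuous_apply n).comp continuous_snd)

/-- If `X, Y, Z` are compact metrizable, `f : X → Y` is continuous, and uncountably many
fibers `f⁻¹{y}` contain a homeomorphic copy of `Z`, then there is a perfect `Q ⊆ Y` and a
continuous injection `i : Q × Z → X` with `f (i (q, u)) = q` for all `(q, u)`. -/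
theorem stmt3 {X Y Z : Type*}
    [TopologicalSpace X] [CompactSpace X] [TopologicalSpace.MetrizableSpace X]
    [TopologicalSpace Y] [CompactSpace Y] [TopologicalSpace.MetrizableSpace Y]
    [TopologicalSpace Z] [CompactSpace Z] [TopologicalSpace.MetrizableSpace Z]
    (f : X → Y) (hf : Continuous f)
    (h : ¬ {y : Y | ∃ e : Z → X, Continuous e ∧ Function.Injective e ∧
        Set.range e ⊆ f ⁻¹' {y}}.Countable) :
    ∃ Q : Set Y, Perfect Q ∧ Q.Nonempty ∧
      ∃ i : Q × Z → X, Continuous i ∧ Function.Injective i ∧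
        ∀ p : Q × Z, f (i p) = (p.1 : Y) := by
  let := TopologicalSpace.metrizableSpaceMetric X
  let := TopologicalSpace.metrizableSpaceMetric Y
  let := TopologicalSpace.metrizableSpaceMetric Z
  set T : Set (Y × C(Z, X) × (ℕ → ℕ)) :=
    {p | (∀ z, f (p.2.1 z) = p.1) ∧ IsInjectivityModulus p.2.1 p.2.2}
  have hfiber : IsClosed {p : Y × C(Z, X) × (ℕ → ℕ) | ∀ z, f (p.2.1 z) = p.1} := by
    simp only [ofPred_forall]
    exact isClosed_iInter fun z => isClosed_eq (by fun_prop) continuous_fst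
  have hT : IsClosed T :=
    hfiber.inter (isClosed_setOf_isInjectivityModulus.preimage continuous_snd)
  have := hT.polishSpace
  have hrange : ¬ (range fun p : T => p.1.1).Countable := by
    refine fun hc => h (hc.mono ?_)
    rintro y ⟨e, he, hinj, hfib⟩
    obtain ⟨μ, hμ⟩ := hinj.exists_isInjectivityModulus he
    exact ⟨⟨(y, ⟨e, he⟩, μ), fun z => hfib (mem_range_self z), hμ⟩, rfl⟩
  obtain ⟨Q, hQ, hQne, s, hs, hπs⟩ :=
    exists_perfect_continuous_section (continuous_fst.comp continuous_subtype_val) hrange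
  have hfib : ∀ q u, f ((s q).1.2.1 u) = q := fun q u => ((s q).2.1 u).trans (hπs q)
  refine ⟨Q, hQ, hQne, fun p => (s p.1).1.2.1 p.2, by fun_prop, ?_, fun p => hfib p.1 p.2⟩
  rintro ⟨q, u⟩ ⟨q', u'⟩ (h : (s q).1.2.1 u = (s q').1.2.1 u')
  obtain rfl : q = q' := Subtype.ext ((hfib q u).symm.trans (h ▸ hfib q' u'))
  exact Prod.ext rfl ((s q).2.2.injective h)
end

section
/- Let X, Y, K be compact metrizable spaces and f : X → Y continuous, and assume that for uncountably many y ∈ Y there is a closed subset of f⁻¹{y} that can be mapped continuously onto K. Then there is a K-loose function for f. -/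
open Set Topology

universe u

/-!
Encode each `y` of the uncountable set as the point `((y, m), Γ)` of the Polish space
`(Y × (ℕ → ℕ)) × Closeds (X × K)`, where `Γ` is the graph of the given map `ψ : C → K` and `m` a
modulus of uniform continuity of `ψ`. Being such a graph over the fibre of `y` is a closed
condition, so a Cantor scheme through condensation points of these parameters that separates the
`y`-coordinates at every split yields a continuous Cantor family of graphs over pairwise distinct
base points. Their union is compact and, the fibres being disjoint, the graph of a map that is
continuous on its closed domain; the Cantor set of base points is uncountable, hence not scattered.
-/

open Filter Function TopologicalSpace Metric CantorScheme PiNat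
open scoped ENNReal

section Condensation

variable {Z : Type*} [TopologicalSpace Z]

def condensationPoints (B : Set Z) : Set Z := {x | ∀ U ∈ 𝓝 x, ¬(U ∩ B).Countable}

variable [SecondCountableTopology Z]

theorem countable_diff_condensationPoints (B : Set Z) : (B \ condensationPoints B).Countable := by
  have hnhds : ∀ x ∈ B \ condensationPoints B, ∃ U ∈ 𝓝 x, (U ∩ B).Countable := fun x hx => by
    simpa [condensationPoints] using hx.2
  choose! U hU hUB using hnhds
  obtain ⟨t, htc, htT, hcover⟩ :=
    (HereditarilyLindelofSpace.isLindelof _).elim_nhds_subcover U hU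
  refine (htc.biUnion fun x hx => hUB x (htT x hx)).mono fun y hy => ?_
  obtain ⟨x, hxt, hyx⟩ := mem_iUnion₂.mp (hcover hy)
  exact mem_biUnion hxt ⟨hyx, hy.1⟩

theorem not_countable_inter_condensationPoints {B : Set Z} (hB : ¬B.Countable) :
    ¬(B ∩ condensationPoints B).Countable := fun h =>
  hB <| inter_union_sdiff B (condensationPoints B) ▸ h.union (countable_diff_condensationPoints B)

theorem not_isScatteredSet_of_not_countable {Q : Set Z} (hQ : ¬Q.Countable) :
    ¬IsScatteredSet Q := by
  intro hscat
  obtain ⟨x, hx, U, hU, hUx⟩ := hscat _ inter_subset_left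
    (not_subsingleton_iff.mp (mt Subsingleton.countable
      (not_countable_inter_condensationPoints hQ))).nonempty
  have hxU : x ∈ U := (hUx.symm ▸ mem_singleton x : x ∈ U ∩ (Q ∩ condensationPoints Q)).1
  refine hx.2 U (hU.mem_nhds hxU) (((countable_diff_condensationPoints Q).insert x).mono ?_)
  rintro y ⟨hyU, hyQ⟩
  by_cases hy : y ∈ condensationPoints Q
  · exact (hUx.subset ⟨hyU, hyQ, hy⟩ : y ∈ ({x} : Set Z)) ▸ mem_insert y _
  · exact mem_insert_of_mem x ⟨hyQ, hy⟩

end Condensation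

section CantorMaps

theorem CantorScheme.injective_comp_inducedMap {β α Y : Type*} {A : List β → Set α} {p : α → Y}
    (hA : ∀ l, Pairwise fun i j => Disjoint (p '' A (i :: l)) (p '' A (j :: l))) :
    Injective (p ∘ (inducedMap A).2) := by
  rintro ⟨x, hx⟩ ⟨y, hy⟩ hxy
  refine Subtype.ext (by_contra fun hne => ?_)
  have hres : res x (firstDiff x y) = res y (firstDiff x y) :=
    res_eq_res.mpr fun _ hm => apply_eq_of_lt_firstDiff hm
  have hx' := map_mem ⟨x, hx⟩ (firstDiff x y + 1)
  have hy' := map_mem ⟨y, hy⟩ (firstDiff x y + 1)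
  rw [res_succ, hres] at hx'
  rw [res_succ] at hy'
  exact (hA _ (apply_firstDiff_ne hne)).ne_of_mem (mem_image_of_mem p hx')
    (mem_image_of_mem p hy') hxy

variable {Z Y : Type*} [TopologicalSpace Y] [T25Space Y] {p : Z → Y}

theorem exists_uncountable_split_of_injOn [EMetricSpace Z] [SecondCountableTopology Z]
    (hp : Continuous p) {B : Set Z} (hB : ¬B.Countable) (hinj : InjOn p B) {r : ℝ≥0∞}
    (hr : 0 < r) :
    ∃ C : Bool → Set Z, (∀ i, C i ⊆ B ∧ ¬(C i).Countable ∧ ediam (C i) ≤ 2 * r) ∧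
      Disjoint (p '' closure (C false)) (p '' closure (C true)) := by
  have piece : ∀ c ∈ B ∩ condensationPoints B, ∀ w : Set Y, IsOpen w → p c ∈ w →
      let P := (eball c r ∩ p ⁻¹' w) ∩ B
      (P ⊆ B ∧ ¬P.Countable ∧ ediam P ≤ 2 * r) ∧ p '' closure P ⊆ closure w := by
    intro c hc w hw hcw
    refine ⟨⟨inter_subset_right, hc.2 _ ?_, ?_⟩, ?_⟩
    · exact inter_mem (eball_mem_nhds c hr) (hw.preimage hp |>.mem_nhds hcw)
    · exact (ediam_mono (inter_subset_left.trans inter_subset_left)).trans ediam_eball_le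
    · exact image_subset_iff.mpr <|
        (closure_mono (inter_subset_left.trans inter_subset_right)).trans
          (hp.closure_preimage_subset w)
  obtain ⟨a, ha, b, hb, hab⟩ := not_subsingleton_iff.mp
    (mt Subsingleton.countable (not_countable_inter_condensationPoints hB))
  obtain ⟨u, hau, hu, v, hbv, hv, huv⟩ :=
    exists_open_nhds_disjoint_closure (hinj.ne ha.1 hb.1 hab)
  obtain ⟨ha', hau'⟩ := piece a ha u hu hau
  obtain ⟨hb', hbv'⟩ := piece b hb v hv hbv
  refine ⟨fun i => cond i _ _, fun i => ?_, huv.mono hau' hbv'⟩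
  cases i
  exacts [ha', hb']

theorem exists_nat_bool_injective_comp_of_injOn [TopologicalSpace Z] [PolishSpace Z]
    (hp : Continuous p) {A : Set Z} (hA : ¬A.Countable) (hinj : InjOn p A) :
    ∃ γ : (ℕ → Bool) → Z, Continuous γ ∧ range γ ⊆ closure A ∧ Injective (p ∘ γ) := by
  let := upgradeIsCompletelyMetrizable Z
  let P := {B : Set Z // B ⊆ A ∧ ¬B.Countable}
  have split : ∀ (B : P) (n : ℕ), ∃ C : Bool → P,
      (∀ i, (C i).1 ⊆ B.1 ∧ ediam (C i).1 ≤ 2 * ((n + 1 : ℕ) : ℝ≥0∞)⁻¹) ∧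
        Disjoint (p '' closure (C false).1) (p '' closure (C true).1) := by
    intro B n
    obtain ⟨C, hC, hdisj⟩ := exists_uncountable_split_of_injOn hp B.2.2 (hinj.mono B.2.1)
      (ENNReal.inv_pos.mpr (ENNReal.natCast_ne_top (n + 1)))
    exact ⟨fun i => ⟨C i, (hC i).1.trans B.2.1, (hC i).2.1⟩,
      fun i => ⟨(hC i).1, (hC i).2.2⟩, hdisj⟩
  choose child hchild hdisj using split
  let BP : List Bool → P := fun l => l.rec ⟨A, subset_rfl, hA⟩ fun i l B => child B l.length i
  let D : List Bool → Set Z := fun l => closure (BP l).1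
  have hanti : ClosureAntitone D :=
    CantorScheme.Antitone.closureAntitone (fun l i => closure_mono (hchild _ _ i).1)
      fun _ => isClosed_closure
  have hdiam_le : ∀ l, ediam (D l) ≤ 2 * (l.length : ℝ≥0∞)⁻¹ := by
    rintro (_ | ⟨i, l⟩)
    · simp
    · rw [ediam_closure]
      exact (hchild _ _ i).2
  have hdiam : VanishingDiam D := by
    intro x
    have h2 : Tendsto (fun n : ℕ => 2 * (n : ℝ≥0∞)⁻¹) atTop (𝓝 0) := by
      simpa using ENNReal.Tendsto.const_mul ENNReal.tendsto_inv_nat_nhds_zero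
        (Or.inr ENNReal.ofNat_ne_top)
    refine tendsto_of_tendsto_of_tendsto_of_le_of_le tendsto_const_nhds h2 (fun _ => bot_le)
      fun n => ?_
    simpa [res_length] using hdiam_le (res x n)
  have hne : ∀ l, (D l).Nonempty := fun l =>
    (not_subsingleton_iff.mp (mt Subsingleton.countable (BP l).2.2)).nonempty.closure
  have hdom := hanti.map_of_vanishingDiam hdiam hne
  have hsep : ∀ l, Pairwise fun i j => Disjoint (p '' D (i :: l)) (p '' D (j :: l)) := by
    intro l i j hij
    cases i <;> cases j
    exacts [absurd rfl hij, hdisj _ _, (hdisj _ _).symm, absurd rfl hij]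
  refine ⟨fun x => (inducedMap D).2 ⟨x, hdom ▸ mem_univ x⟩,
    hdiam.map_continuous.comp (by fun_prop), ?_,
    (injective_comp_inducedMap hsep).comp fun x y h => congrArg Subtype.val h⟩
  rintro _ ⟨x, rfl⟩
  exact map_mem _ 0

end CantorMaps

namespace TopologicalSpace.Closeds

variable {α : Type*} [EMetricSpace α]

theorem isClosed_setOf_forall_mem_forall_mem {W : Type*} [TopologicalSpace W]
    {R : Set (W × α × α)} (hR : IsClosed R) :
    IsClosed {c : W × Closeds α | ∀ x ∈ c.2, ∀ y ∈ c.2, (c.1, x, y) ∈ R} := by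
  rw [← isOpen_compl_iff, isOpen_iff_mem_nhds]
  rintro ⟨w, G⟩ hc
  simp only [mem_compl_iff, mem_ofPred_eq, not_forall] at hc
  obtain ⟨x, hx, y, hy, hxy⟩ := hc
  have hRc : Rᶜ ∈ 𝓝 (w, x, y) := hR.isOpen_compl.mem_nhds hxy
  rw [nhds_prod_eq, nhds_prod_eq] at hRc
  obtain ⟨U, hU, V, hV, hUV⟩ := mem_prod_iff.mp hRc
  obtain ⟨V₁, hV₁, V₂, hV₂, hV₁₂⟩ := mem_prod_iff.mp hV
  obtain ⟨r₁, hr₁, hball₁⟩ := EMetric.mem_nhds_iff.mp hV₁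
  obtain ⟨r₂, hr₂, hball₂⟩ := EMetric.mem_nhds_iff.mp hV₂
  filter_upwards [prod_mem_nhds hU (eball_mem_nhds G (lt_min hr₁ hr₂))]
    with ⟨w', G'⟩ ⟨hw', hG'⟩ hall
  have hGG' : hausdorffEDist (G : Set α) G' < min r₁ r₂ := by
    rw [mem_eball, edist_comm] at hG'
    exact hG'
  obtain ⟨x', hx', hxx'⟩ := exists_edist_lt_of_hausdorffEDist_lt hx hGG'
  obtain ⟨y', hy', hyy'⟩ := exists_edist_lt_of_hausdorffEDist_lt hy hGG'
  refine hUV ⟨hw', hV₁₂ ⟨hball₁ ?_, hball₂ ?_⟩⟩ (hall x' hx' y' hy')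
  · rw [mem_eball, edist_comm]
    exact hxx'.trans_le (min_le_left _ _)
  · rw [mem_eball, edist_comm]
    exact hyy'.trans_le (min_le_right _ _)

theorem isClosed_setOf_mem : IsClosed {c : α × Closeds α | c.1 ∈ c.2} := by
  have h : {c : α × Closeds α | c.1 ∈ c.2} = (fun c => infEDist c.1 c.2) ⁻¹' {0} := by
    ext c
    exact mem_iff_infEDist_zero_of_closed c.2.isClosed
  rw [h]
  exact isClosed_singleton.preimage continuous_infEDist

theorem isClosed_iUnion_of_continuous {T : Type*} [TopologicalSpace T] [CompactSpace T]
    {G : T → Closeds α} (hG : Continuous G) : IsClosed (⋃ t, (G t : Set α)) := by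
  have h : IsClosed {c : T × α | c.2 ∈ G c.1} :=
    isClosed_setOf_mem.preimage (continuous_snd.prodMk (hG.comp continuous_fst))
  convert isClosedMap_snd_of_compactSpace _ h
  ext z
  simp

theorem isClosed_setOf_image_snd_eq_univ {X K : Type*} [EMetricSpace X] [EMetricSpace K]
    [CompactSpace X] : IsClosed {G : Closeds (X × K) | Prod.snd '' (G : Set (X × K)) = univ} := by
  have hmem : IsClosed {c : X × K × Closeds (X × K) | (c.1, c.2.1) ∈ c.2.2} :=
    isClosed_setOf_mem.preimage (f := fun c : X × K × Closeds (X × K) => ((c.1, c.2.1), c.2.2))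
      (by fun_prop)
  have hproj := isClosedMap_snd_of_compactSpace _ hmem
  simp only [eq_univ_iff_forall, ofPred_forall]
  refine isClosed_iInter fun a => ?_
  convert hproj.preimage (Continuous.prodMk_right a) using 1
  ext G
  simp

end TopologicalSpace.Closeds

theorem not_countable_range_of_injective {Y : Type*} {g : (ℕ → Bool) → Y} (hg : Injective g) :
    ¬(range g).Countable := by
  have : Uncountable (ℕ → Bool) := by
    rw [← not_countable_iff, ← Cardinal.mk_le_aleph0_iff, not_le]
    simpa using Cardinal.cantor Cardinal.aleph0
  exact fun hc => not_countable <| countable_univ_iff.mp <|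
    (mapsTo_range g univ).countable_of_injOn hg.injOn hc

theorem exists_continuousOn_of_isCompact_graph {X K : Type*} [TopologicalSpace X] [T2Space X]
    [TopologicalSpace K] [Nonempty (X → K)] {U : Set (X × K)} (hU : IsCompact U)
    (hfun : ∀ x a b, (x, a) ∈ U → (x, b) ∈ U → a = b) :
    ∃ φ : X → K, ContinuousOn φ (Prod.fst '' U) ∧ ∀ z ∈ U, φ z.1 = z.2 := by
  classical
  obtain ⟨φ₀⟩ := ‹Nonempty (X → K)›
  let φ : X → K := fun x => if h : ∃ a, (x, a) ∈ U then h.choose else φ₀ x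
  have hφ : ∀ z ∈ U, φ z.1 = z.2 := fun z hz => by
    have h : ∃ a, (z.1, a) ∈ U := ⟨z.2, hz⟩
    simp only [φ, dif_pos h]
    exact hfun _ _ _ h.choose_spec hz
  refine ⟨φ, continuousOn_iff_isClosed.mpr fun t ht => ⟨Prod.fst '' (U ∩ univ ×ˢ t),
    ((hU.inter_right (isClosed_univ.prod ht)).image continuous_fst).isClosed, ?_⟩, hφ⟩
  ext x
  constructor
  · rintro ⟨hxt, z, hz, rfl⟩
    exact ⟨⟨z, ⟨hz, trivial, hφ z hz ▸ hxt⟩, rfl⟩, z, hz, rfl⟩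
  · rintro ⟨⟨z, ⟨hz, -, hzt⟩, rfl⟩, hx⟩
    exact ⟨by rwa [mem_preimage, hφ z hz], hx⟩

section OntoGraph

variable {X Y K : Type*} [EMetricSpace X] [EMetricSpace K]

/-- The modulus `m` makes this a closed condition on `(y, m, G)`: Hausdorff limits of graphs need
not be graphs, but limits of graphs with a common modulus are. -/
structure IsOntoGraphOver (f : X → Y) (y : Y) (m : ℕ → ℕ) (G : Set (X × K)) : Prop where
  fst_mem_fiber : ∀ z ∈ G, f z.1 = y
  modulus : ∀ k, ∀ z ∈ G, ∀ w ∈ G,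
    edist z.1 w.1 < (m k : ℝ≥0∞)⁻¹ → edist z.2 w.2 ≤ (k : ℝ≥0∞)⁻¹
  image_snd : Prod.snd '' G = univ

variable {f : X → Y} {y : Y} {m : ℕ → ℕ} {G : Set (X × K)}

theorem IsOntoGraphOver.eq_of_mem (hG : IsOntoGraphOver f y m G) {x : X} {a b : K}
    (ha : (x, a) ∈ G) (hb : (x, b) ∈ G) : a = b := by
  by_contra hab
  obtain ⟨k, hk⟩ := ENNReal.exists_inv_nat_lt (edist_pos.mpr hab).ne'
  refine (hG.modulus k _ ha _ hb ?_).not_gt hk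
  simp

theorem exists_isOntoGraphOver {C : Set X} (hC : IsCompact C) (hCf : C ⊆ f ⁻¹' {y}) {ψ : X → K}
    (hψ : ContinuousOn ψ C) (honto : ψ '' C = univ) :
    ∃ (m : ℕ → ℕ) (G : Closeds (X × K)), IsOntoGraphOver f y m (G : Set (X × K)) := by
  have hmod : ∀ k : ℕ, ∃ j : ℕ, ∀ x ∈ C, ∀ x' ∈ C,
      edist x x' < (j : ℝ≥0∞)⁻¹ → edist (ψ x) (ψ x') ≤ (k : ℝ≥0∞)⁻¹ := by
    intro k
    obtain ⟨δ, hδ, hψδ⟩ := EMetric.uniformContinuousOn_iff.mp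
      (hC.uniformContinuousOn_of_continuous hψ) _ (ENNReal.inv_pos.mpr (ENNReal.natCast_ne_top k))
    obtain ⟨j, hj⟩ := ENNReal.exists_inv_nat_lt hδ.ne'
    exact ⟨j, fun x hx x' hx' h => (hψδ hx hx' (h.trans hj)).le⟩
  choose m hm using hmod
  refine ⟨m, ⟨(fun x => (x, ψ x)) '' C,
    (hC.image_of_continuousOn (continuousOn_id.prodMk hψ)).isClosed⟩, ?_, ?_, ?_⟩
  · rintro _ ⟨x, hx, rfl⟩
    exact hCf hx
  · rintro k _ ⟨x, hx, rfl⟩ _ ⟨x', hx', rfl⟩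
    exact hm k x hx x' hx'
  · simp only [Closeds.coe_mk, image_image, honto]

theorem isClosed_setOf_isOntoGraphOver [CompactSpace X] [TopologicalSpace Y] [T2Space Y]
    (hf : Continuous f) :
    IsClosed {c : (Y × (ℕ → ℕ)) × Closeds (X × K) |
      IsOntoGraphOver f c.1.1 c.1.2 (c.2 : Set (X × K))} := by
  let R : Set ((Y × (ℕ → ℕ)) × (X × K) × (X × K)) := {c | f c.2.1.1 = c.1.1} ∩
    ⋂ k, {c | ((c.1.2 k : ℝ≥0∞))⁻¹ ≤ edist c.2.1.1 c.2.2.1} ∪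
      {c | edist c.2.1.2 c.2.2.2 ≤ (k : ℝ≥0∞)⁻¹}
  have hR : IsClosed R := by
    have hinv : Continuous fun n : ℕ => (n : ℝ≥0∞)⁻¹ := continuous_of_discreteTopology
    refine (isClosed_eq (by fun_prop) (by fun_prop)).inter (isClosed_iInter fun k => ?_)
    exact (isClosed_le (hinv.comp (by fun_prop)) (by fun_prop)).union
      (isClosed_le (by fun_prop) continuous_const)
  convert (Closeds.isClosed_setOf_forall_mem_forall_mem hR).inter
    (Closeds.isClosed_setOf_image_snd_eq_univ.preimage continuous_snd) using 1
  ext ⟨⟨y, m⟩, G⟩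
  constructor
  · intro hG
    refine ⟨fun z hz w hw => ⟨hG.fst_mem_fiber z hz, mem_iInter.mpr fun k => ?_⟩, hG.image_snd⟩
    exact or_iff_not_imp_left.mpr fun hlt => hG.modulus k z hz w hw (not_le.mp hlt)
  · rintro ⟨hR, honto⟩
    exact ⟨fun z hz => (hR z hz z hz).1,
      fun k z hz w hw hlt => (mem_iInter.mp (hR z hz w hw).2 k).resolve_left (not_le.mpr hlt),
      honto⟩

theorem exists_nat_bool_family_isOntoGraphOver [CompactSpace X] [CompactSpace K]
    [TopologicalSpace Y] [PolishSpace Y] (hf : Continuous f) {S : Set Y} (hS : ¬S.Countable)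
    (hdata : ∀ y ∈ S, ∃ (m : ℕ → ℕ) (G : Closeds (X × K)),
      IsOntoGraphOver f y m (G : Set (X × K))) :
    ∃ γ : (ℕ → Bool) → (Y × (ℕ → ℕ)) × Closeds (X × K), Continuous γ ∧
      Injective (fun σ => (γ σ).1.1) ∧
      ∀ σ, IsOntoGraphOver f (γ σ).1.1 (γ σ).1.2 ((γ σ).2 : Set (X × K)) := by
  choose! m G hG using hdata
  let p : (Y × (ℕ → ℕ)) × Closeds (X × K) → Y := fun c => c.1.1
  have hA : ¬(S.image fun y => ((y, m y), G y)).Countable := fun hc => hS <| by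
    simpa [p, image_image] using hc.image p
  have hinj : InjOn p (S.image fun y => ((y, m y), G y)) := by
    rintro _ ⟨y, -, rfl⟩ _ ⟨y', -, rfl⟩ hyy'
    simp only [p] at hyy'
    rw [hyy']
  obtain ⟨γ, hγ, hγA, hγinj⟩ :=
    exists_nat_bool_injective_comp_of_injOn (p := p) (by fun_prop) hA hinj
  refine ⟨γ, hγ, hγinj, fun σ => closure_minimal ?_ (isClosed_setOf_isOntoGraphOver hf)
    (hγA ⟨σ, rfl⟩)⟩
  rintro _ ⟨y, hy, rfl⟩
  exact hG y hy

theorem exists_looseFunction_of_continuous_family [CompactSpace X] [CompactSpace K]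
    [TopologicalSpace Y] [Nonempty (X → K)] {T : Type*} [TopologicalSpace T] [CompactSpace T]
    {y : T → Y} {G : T → Closeds (X × K)} (hG : Continuous G) (hy : Injective y)
    (hQ : ¬IsScatteredSet (range y))
    (hgraph : ∀ t, ∃ m, IsOntoGraphOver f (y t) m (G t : Set (X × K))) :
    ∃ (D : Set X) (φ : X → K), LooseFunction f D φ := by
  choose m hgraph using hgraph
  set U := ⋃ t, (G t : Set (X × K))
  have hU : IsCompact U := (Closeds.isClosed_iUnion_of_continuous hG).isCompact
  have hfun : ∀ x a b, (x, a) ∈ U → (x, b) ∈ U → a = b := by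
    simp only [U, mem_iUnion]
    rintro x a b ⟨s, hs⟩ ⟨t, ht⟩
    obtain rfl : s = t :=
      hy (((hgraph s).fst_mem_fiber (x, a) hs).symm.trans ((hgraph t).fst_mem_fiber (x, b) ht))
    exact (hgraph s).eq_of_mem hs ht
  obtain ⟨φ, hφ, hφU⟩ := exists_continuousOn_of_isCompact_graph hU hfun
  refine ⟨Prod.fst '' U, φ, (hU.image continuous_fst).isClosed, hφ, range y, hQ, ?_⟩
  rintro _ ⟨t, rfl⟩
  refine eq_univ_of_forall fun a => ?_
  obtain ⟨z, hz, rfl⟩ : a ∈ Prod.snd '' (G t : Set (X × K)) := (hgraph t).image_snd ▸ mem_univ a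
  have hzU : z ∈ U := mem_iUnion.mpr ⟨t, hz⟩
  exact ⟨z.1, ⟨(hgraph t).fst_mem_fiber z hz, mem_image_of_mem _ hzU⟩, hφU z hzU⟩

end OntoGraph

/-- If `X, Y, K` are compact metrizable, `f : X → Y` is continuous, and for uncountably
many `y ∈ Y` some closed subset of `f⁻¹{y}` maps continuously onto `K`, then there is a
`K`-loose function for `f`. -/
theorem stmt4 {X Y K : Type*}
    [TopologicalSpace X] [CompactSpace X] [TopologicalSpace.MetrizableSpace X]
    [TopologicalSpace Y] [CompactSpace Y] [TopologicalSpace.MetrizableSpace Y]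
    [TopologicalSpace K] [CompactSpace K] [TopologicalSpace.MetrizableSpace K]
    (f : X → Y) (hf : Continuous f)
    (h : ¬ {y : Y | ∃ C : Set X, IsClosed C ∧ C ⊆ f ⁻¹' {y} ∧
        ∃ ψ : X → K, ContinuousOn ψ C ∧ ψ '' C = Set.univ}.Countable) :
    ∃ (D : Set X) (φ : X → K), LooseFunction f D φ := by
  let := metrizableSpaceMetric X
  let := metrizableSpaceMetric Y
  let := metrizableSpaceMetric K
  obtain ⟨γ, hγ, hγinj, hgraph⟩ := exists_nat_bool_family_isOntoGraphOver hf h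
    fun y ⟨C, hC, hCf, ψ, hψ, honto⟩ => exists_isOntoGraphOver hC.isCompact hCf hψ honto
  have : Nonempty (X → K) := by
    obtain ⟨-, -, -, -, ψ, -⟩ := (not_subsingleton_iff.mp (mt Subsingleton.countable h)).nonempty
    exact ⟨ψ⟩
  exact exists_looseFunction_of_continuous_family hγ.snd hγinj
    (not_isScatteredSet_of_not_countable (not_countable_range_of_injective hγinj))
    fun σ => ⟨_, hgraph σ⟩
end

section
/- Let X, Y, Z be compact Hausdorff spaces, let m, n be finite, and let f : X → Y and g : Y → Z be continuous surjections. If f is (m+1)-tight and g is (n+1)-tight, then g ∘ f is (mn+1)-tight. -/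
open Set Topology

universe u

section AuxScattered
variable {Y : Type*} [TopologicalSpace Y]

def Crowded (T : Set Y) : Prop := ∀ x ∈ T, ∀ U : Set Y, IsOpen U → U ∩ T ≠ {x}

lemma isScattered_mono {S T : Set Y} (h : IsScatteredSet S) (hts : T ⊆ S) : IsScatteredSet T :=
  fun T' hT' hne => h T' (hT'.trans hts) hne

lemma not_scattered_iff {S : Set Y} :
    ¬ IsScatteredSet S ↔ ∃ T ⊆ S, T.Nonempty ∧ Crowded T := by
  unfold IsScatteredSet Crowded
  push_neg
  constructor
  · rintro ⟨T, h1, h2, h3⟩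
    exact ⟨T, h1, h2, fun x hx U hU => h3 x hx U hU⟩
  · rintro ⟨T, h1, h2, h3⟩
    exact ⟨T, h1, h2, fun x hx U hU => h3 x hx U hU⟩

lemma not_scattered_of_crowded {S T : Set Y} (hts : T ⊆ S) (hne : T.Nonempty)
    (hc : Crowded T) : ¬ IsScatteredSet S :=
  not_scattered_iff.2 ⟨T, hts, hne, hc⟩

lemma nonscat_nonempty {S : Set Y} (h : ¬ IsScatteredSet S) : S.Nonempty := by
  obtain ⟨T, h1, h2, -⟩ := not_scattered_iff.1 h
  exact h2.mono h1

lemma Crowded.closure {T : Set Y} (h : Crowded T) : Crowded (_root_.closure T) := by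
  intro x hx U hU heq
  have hxU : x ∈ U := by rw [← singleton_subset_iff, ← heq]; exact fun y hy => hy.1
  have hne : (U ∩ T).Nonempty := mem_closure_iff.1 hx U hU hxU
  have hsub : U ∩ T ⊆ {x} := heq ▸ inter_subset_inter_right U subset_closure
  obtain ⟨z, hz⟩ := hne
  have hzx : z = x := hsub hz
  subst hzx
  exact h z hz.2 U hU (hsub.antisymm (singleton_subset_iff.2 hz))

lemma Crowded.inter_open {T U : Set Y} (h : Crowded T) (hU : IsOpen U) : Crowded (T ∩ U) := by
  intro x hx V hV heq
  apply h x hx.1 (V ∩ U) (hV.inter hU)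
  rw [← heq]; ext y; constructor
  · rintro ⟨⟨h1, h2⟩, h3⟩; exact ⟨h1, h3, h2⟩
  · rintro ⟨h1, h2, h3⟩; exact ⟨⟨h1, h3⟩, h2⟩

lemma scat_empty : IsScatteredSet (∅ : Set Y) := by
  intro T hT hne; exact absurd (subset_empty_iff.1 hT) hne.ne_empty

lemma scat_union [T1Space Y] {A B : Set Y} (hA : IsScatteredSet A) (hB : IsScatteredSet B) :
    IsScatteredSet (A ∪ B) := by
  intro T hT hne
  by_cases hTA : (T ∩ A).Nonempty
  · obtain ⟨x, hx, U, hU, hUx⟩ := hA (T ∩ A) inter_subset_right hTA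
    by_cases hS : ((U ∩ T ∩ B) \ {x}).Nonempty
    · obtain ⟨y, hy, V, hV, hVy⟩ := hB ((U ∩ T ∩ B) \ {x})
        (fun z hz => hz.1.2) hS
      refine ⟨y, hy.1.1.2, U ∩ V ∩ {x}ᶜ, (hU.inter hV).inter isClosed_singleton.isOpen_compl, ?_⟩
      ext w; constructor
      · rintro ⟨⟨⟨hwU, hwV⟩, hwx⟩, hwT⟩
        have hwAB := hT hwT
        have hwB : w ∈ B := by
          rcases hwAB with hwA | hwB
          · exact absurd (show w ∈ U ∩ (T ∩ A) from ⟨hwU, hwT, hwA⟩) (by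
              rw [hUx]; exact hwx)
          · exact hwB
        have : w ∈ V ∩ ((U ∩ T ∩ B) \ {x}) := ⟨hwV, ⟨⟨hwU, hwT⟩, hwB⟩, hwx⟩
        rw [hVy] at this; exact this
      · intro hw
        have hw' : w = y := hw
        subst hw'
        have hyV : w ∈ V ∩ ((U ∩ T ∩ B) \ {x}) := by rw [hVy]; rfl
        exact ⟨⟨⟨hy.1.1.1, hyV.1⟩, hy.2⟩, hy.1.1.2⟩
    · refine ⟨x, hx.1, U, hU, ?_⟩
      rw [not_nonempty_iff_eq_empty, diff_eq_empty] at hS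
      ext w; constructor
      · rintro ⟨hwU, hwT⟩
        rcases hT hwT with hwA | hwB
        · exact hUx ▸ (show w ∈ U ∩ (T ∩ A) from ⟨hwU, hwT, hwA⟩)
        · exact hS ⟨⟨hwU, hwT⟩, hwB⟩
      · intro hw
        have hw' : w = x := hw
        subst hw'
        have : w ∈ U ∩ (T ∩ A) := by rw [hUx]; rfl
        exact ⟨this.1, hx.1⟩
  · rw [not_nonempty_iff_eq_empty] at hTA
    apply hB T (fun z hz => (hT hz).resolve_left (fun hA' => by
      exact absurd (show z ∈ T ∩ A from ⟨hz, hA'⟩) (hTA ▸ notMem_empty z))) hne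

lemma scat_biUnion [T1Space Y] {ι : Type*} (s : Finset ι) (A : ι → Set Y)
    (h : ∀ i ∈ s, IsScatteredSet (A i)) : IsScatteredSet (⋃ i ∈ s, A i) := by
  classical
  induction s using Finset.induction with
  | empty => simpa using scat_empty
  | @insert a s' hi ih =>
    rw [Finset.set_biUnion_insert]
    exact scat_union (h a (Finset.mem_insert_self a s'))
      (ih fun i hi' => h i (Finset.mem_insert_of_mem hi'))

lemma scat_image {Z : Type*} [TopologicalSpace Z] [T2Space Y] [T2Space Z] {g : Y → Z}
    (hg : Continuous g) {K : Set Y} (hK : IsCompact K) (h : IsScatteredSet K) :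
    IsScatteredSet (g '' K) := by
  by_contra hns
  obtain ⟨T, hTsub, hTne, hTc⟩ := not_scattered_iff.1 hns
  set M := closure T with hM
  have hMc : Crowded M := hTc.closure
  have hMne : M.Nonempty := hTne.mono subset_closure
  have hMsub : M ⊆ g '' K := by
    rw [hM]
    exact closure_minimal hTsub (hK.image hg).isClosed
  set S : Set (Set Y) := {F | F ⊆ K ∧ IsClosed F ∧ M ⊆ g '' F} with hS
  have hKS : K ∈ S := ⟨Subset.rfl, hK.isClosed, hMsub⟩
  have hchain : ∀ c ⊆ S, IsChain (· ⊆ ·) c → c.Nonempty → ∃ lb ∈ S, ∀ s ∈ c, lb ⊆ s := by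
    intro c hcS hc hcne
    refine ⟨⋂₀ c, ⟨?_, ?_, ?_⟩, fun F hF => sInter_subset_of_mem hF⟩
    · obtain ⟨F, hF⟩ := hcne
      exact (sInter_subset_of_mem hF).trans (hcS hF).1
    · exact isClosed_sInter fun F hF => (hcS hF).2.1
    · intro z hz
      have : (⋂ F : c, ((F : Set Y) ∩ g ⁻¹' {z})).Nonempty := by
        haveI : Nonempty c := hcne.to_subtype
        apply IsCompact.nonempty_iInter_of_directed_nonempty_isCompact_isClosed
        · intro F G
          rcases hc.total F.2 G.2 with hfg | hgf
          · exact ⟨F, Subset.rfl, inter_subset_inter_left _ hfg⟩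
          · exact ⟨G, inter_subset_inter_left _ hgf, Subset.rfl⟩
        · intro F
          obtain ⟨y, hyF, hgy⟩ := (hcS F.2).2.2 hz
          exact ⟨y, hyF, hgy⟩
        · intro F
          exact ((hK.of_isClosed_subset (hcS F.2).2.1 (hcS F.2).1)).inter_right
            (isClosed_singleton.preimage hg)
        · intro F
          exact ((hcS F.2).2.1.inter (isClosed_singleton.preimage hg))
      obtain ⟨y, hy⟩ := this
      simp only [mem_iInter] at hy
      refine ⟨y, ?_, (hy ⟨_, hcne.choose_spec⟩).2⟩
      intro F hF
      exact (hy ⟨F, hF⟩).1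
  obtain ⟨F₀, -, hF₀S, hF₀min⟩ := zorn_superset_nonempty S hchain K hKS
  obtain ⟨hF₀K, hF₀cl, hF₀img⟩ := hF₀S
  have hF₀ne : F₀.Nonempty := by
    obtain ⟨z, hz⟩ := hMne
    obtain ⟨y, hy, -⟩ := hF₀img hz
    exact ⟨y, hy⟩
  obtain ⟨x, hxF, U, hU, hUF⟩ := h F₀ hF₀K hF₀ne
  set F' := F₀ \ U with hF'
  have hF'cl : IsClosed F' := hF₀cl.sdiff hU
  have hF'sub : F' ⊆ K := (diff_subset).trans hF₀K
  have hF'ne : ¬ (M ⊆ g '' F') := by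
    intro hMF'
    have : F' = F₀ := diff_subset.antisymm (hF₀min ⟨hF'sub, hF'cl, hMF'⟩ diff_subset)
    have hxU : x ∈ U := by
      have : x ∈ U ∩ F₀ := by rw [hUF]; rfl
      exact this.1
    rw [← this] at hxF
    exact hxF.2 hxU
  obtain ⟨z, hzM, hzn⟩ := not_subset.1 hF'ne
  have hzgx : z = g x := by
    obtain ⟨y, hyF₀, hgy⟩ := hF₀img hzM
    by_cases hyU : y ∈ U
    · have : y ∈ U ∩ F₀ := ⟨hyU, hyF₀⟩
      rw [hUF] at this
      rw [← hgy, this]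
    · exact absurd ⟨y, ⟨hyF₀, hyU⟩, hgy⟩ hzn
  have hF'cpt : IsCompact (g '' F') := (hK.of_isClosed_subset hF'cl hF'sub).image hg
  have hV : IsOpen (g '' F')ᶜ := hF'cpt.isClosed.isOpen_compl
  apply hMc z hzM _ hV
  ext w; constructor
  · rintro ⟨hwn, hwM⟩
    obtain ⟨y, hyF₀, hgy⟩ := hF₀img hwM
    by_cases hyU : y ∈ U
    · have : y ∈ U ∩ F₀ := ⟨hyU, hyF₀⟩
      rw [hUF] at this
      have : w = g x := by rw [← hgy, this]
      simp [this, hzgx]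
    · exact absurd ⟨y, ⟨hyF₀, hyU⟩, hgy⟩ hwn
  · intro hw
    have hw' : w = z := hw
    subst hw'
    exact ⟨hzn, hzM⟩

end AuxScattered

lemma nonscat_of_image_superset {Y Z : Type*} [TopologicalSpace Y] [T2Space Y]
    [TopologicalSpace Z] [T2Space Z] [CompactSpace Z] {g : Y → Z} (hg : Continuous g) {K : Set Y} {Q : Set Z}
    (hK : IsCompact K) (hQ : ¬ IsScatteredSet Q) (hsub : Q ⊆ g '' K) : ¬ IsScatteredSet K :=
  fun hs => hQ (isScattered_mono (scat_image hg hK hs) hsub)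

lemma core {Y Z : Type*} [TopologicalSpace Y] [CompactSpace Y] [T2Space Y]
    [TopologicalSpace Z] [T2Space Z] [CompactSpace Z] {g : Y → Z} (hg : Continuous g)
    (m n : ℕ) {ι : Type*} (Yf : ι → Set Y) (hYcl : ∀ i, IsClosed (Yf i)) :
    ∀ (k : ℕ) (B : Finset (Finset ι)) (Qc : Set Z), B.card ≤ k →
      (↑B : Set (Finset ι)).Pairwise (fun a b => Disjoint a b) →
      (∀ b ∈ B, b.Nonempty) →
      ¬ IsScatteredSet Qc →
      (∀ b ∈ B, Qc ⊆ g '' (⋂ i ∈ b, Yf i)) →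
      m * n + 1 ≤ ∑ b ∈ B, b.card →
      (∃ (S : Finset ι) (R : Set Y), m + 1 ≤ S.card ∧ IsClosed R ∧ ¬ IsScatteredSet R ∧
        ∀ i ∈ S, R ⊆ Yf i) ∨
      (∃ (Bs : Fin (n + 1) → Set Y) (N : Set Z), (∀ s, IsClosed (Bs s)) ∧
        Pairwise (Function.onFun Disjoint Bs) ∧ ¬ IsScatteredSet N ∧ ∀ s, N ⊆ g '' Bs s) := by
  classical
  have hWcl : ∀ b : Finset ι, IsClosed (⋂ i ∈ b, Yf i) :=
    fun b => isClosed_biInter (fun i _ => hYcl i)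
  set W : Finset ι → Set Y := fun b => ⋂ i ∈ b, Yf i with hW
  intro k
  induction k with
  | zero =>
    intro B Qc hcard _ _ _ _ hsum
    rw [Nat.le_zero, Finset.card_eq_zero] at hcard
    subst hcard
    simp at hsum
  | succ k ih =>
    intro B Qc hcard hdisj hbne hQc himg hsum
    by_cases hbig : ∃ b ∈ B, m + 1 ≤ b.card
    · obtain ⟨b, hbB, hbcard⟩ := hbig
      refine Or.inl ⟨b, W b, hbcard, hWcl b, ?_, fun i hi => biInter_subset_of_mem hi⟩
      exact nonscat_of_image_superset hg ((hWcl b).isCompact) hQc (himg b hbB)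
    · push_neg at hbig
      -- all blocks have card ≤ m
      have hble : ∀ b ∈ B, b.card ≤ m := fun b hb => Nat.lt_succ_iff.mp (hbig b hb)
      have hBcard : n + 1 ≤ B.card := by
        have h1 : ∑ b ∈ B, b.card ≤ B.card * m := by
          have := Finset.sum_le_card_nsmul B _ m hble
          simpa using this
        have h2 : n * m < B.card * m := by
          calc n * m = m * n := Nat.mul_comm n m
          _ < m * n + 1 := Nat.lt_succ_self _
          _ ≤ B.card * m := le_trans hsum h1
        exact Nat.lt_of_mul_lt_mul_right h2
      obtain ⟨T, hTB, hTcard⟩ := Finset.exists_subset_card_eq hBcard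
      by_cases hsp : ∀ b ∈ T, ∀ b' ∈ T, b ≠ b' →
          IsScatteredSet (Qc ∩ g '' (W b ∩ W b'))
      · -- subcase 1 : produce the disjoint family for g
        right
        set pairs : Finset (Finset ι × Finset ι) :=
          (T ×ˢ T).filter (fun p => p.1 ≠ p.2) with hpairs
        set K : Set Z := ⋃ p ∈ pairs, g '' (W p.1 ∩ W p.2) with hK
        have hKcl : IsClosed K := by
          apply Set.Finite.isClosed_biUnion (pairs.finite_toSet)
          intro p _
          exact (((hWcl p.1).inter (hWcl p.2)).isCompact.image hg).isClosed
        have hQKscat : IsScatteredSet (Qc ∩ K) := by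
          have : Qc ∩ K = ⋃ p ∈ pairs, (Qc ∩ g '' (W p.1 ∩ W p.2)) := by
            rw [hK, inter_iUnion₂]
          rw [this]
          apply scat_biUnion
          intro p hp
          rw [hpairs, Finset.mem_filter, Finset.mem_product] at hp
          exact hsp p.1 hp.1.1 p.2 hp.1.2 hp.2
        have hQdiff : ¬ IsScatteredSet (Qc \ K) := by
          intro hscat
          apply hQc
          apply isScattered_mono (scat_union hscat hQKscat)
          intro z hz
          by_cases hzK : z ∈ K
          · exact Or.inr ⟨hz, hzK⟩
          · exact Or.inl ⟨hz, hzK⟩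
        obtain ⟨T', hT'sub, hT'ne, hT'c⟩ := not_scattered_iff.1 hQdiff
        obtain ⟨t, ht⟩ := hT'ne
        have htK : t ∉ K := (hT'sub ht).2
        obtain ⟨C', hC'nhds, hC'cl, hC'sub⟩ :=
          exists_mem_nhds_isClosed_subset (hKcl.isOpen_compl.mem_nhds htK)
        set U : Set Z := interior C' with hU
        have htU : t ∈ U := mem_interior_iff_mem_nhds.2 hC'nhds
        set C : Set Z := closure U with hC
        have hCsub : C ⊆ Kᶜ := (closure_minimal interior_subset hC'cl).trans hC'sub
        have e : Fin (n + 1) ≃ {x // x ∈ T} := (finCongr hTcard.symm).trans T.equivFin.symm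
        refine ⟨fun s => W (e s : Finset ι) ∩ g ⁻¹' C, Qc ∩ C, ?_, ?_, ?_, ?_⟩
        · intro s
          exact (hWcl _).inter (isClosed_closure.preimage hg)
        · intro s s' hss
          have hne : ((e s : Finset ι)) ≠ ((e s' : Finset ι)) := by
            intro h
            exact hss (e.injective (Subtype.ext h))
          rw [Function.onFun]
          rw [Set.disjoint_left]
          rintro y ⟨hy1, hy2⟩ ⟨hy1', _⟩
          have hp : ((e s : Finset ι), (e s' : Finset ι)) ∈ pairs := by
            rw [hpairs, Finset.mem_filter, Finset.mem_product]
            exact ⟨⟨(e s).2, (e s').2⟩, hne⟩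
          have : g y ∈ K := by
            rw [hK]
            exact mem_biUnion hp ⟨y, ⟨hy1, hy1'⟩, rfl⟩
          exact hCsub hy2 this
        · apply not_scattered_of_crowded (T := T' ∩ U)
          · rintro z ⟨hz1, hz2⟩
            exact ⟨(hT'sub hz1).1, subset_closure hz2⟩
          · exact ⟨t, ht, htU⟩
          · exact hT'c.inter_open isOpen_interior
        · rintro s z ⟨hzQ, hzC⟩
          obtain ⟨y, hyW, hgy⟩ := himg (e s : Finset ι) (hTB (e s).2) hzQ
          exact ⟨y, ⟨hyW, by rw [mem_preimage, hgy]; exact hzC⟩, hgy⟩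
      · -- subcase 2 : merge two blocks
        push_neg at hsp
        obtain ⟨b, hbT, b', hb'T, hbb', hQ'⟩ := hsp
        have hbB : b ∈ B := hTB hbT
        have hb'B : b' ∈ B := hTB hb'T
        have hdbb' : Disjoint b b' := hdisj hbB hb'B hbb'
        set B' : Finset (Finset ι) := insert (b ∪ b') ((B.erase b).erase b') with hB'
        set Qc' : Set Z := Qc ∩ g '' (W b ∩ W b') with hQc'
        have hWun : W (b ∪ b') = W b ∩ W b' := by
          rw [hW]
          ext y
          simp only [mem_iInter, mem_inter_iff, Finset.mem_union]
          constructor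
          · intro h; exact ⟨fun i hi => h i (Or.inl hi), fun i hi => h i (Or.inr hi)⟩
          · rintro ⟨h1, h2⟩ i (hi | hi)
            · exact h1 i hi
            · exact h2 i hi
        have hmem_ee : ∀ c, c ∈ (B.erase b).erase b' → c ∈ B ∧ c ≠ b ∧ c ≠ b' := by
          intro c hc
          rw [Finset.mem_erase, Finset.mem_erase] at hc
          exact ⟨hc.2.2, hc.2.1, hc.1⟩
        have hnotin : b ∪ b' ∉ (B.erase b).erase b' := by
          intro hmem
          obtain ⟨hcB, hcb, _⟩ := hmem_ee _ hmem
          have hd : Disjoint b (b ∪ b') := hdisj hbB hcB hcb.symm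
          obtain ⟨i, hi⟩ := hbne b hbB
          exact Set.disjoint_left.1 (Finset.disjoint_coe.2 hd) hi
            (Finset.mem_union_left _ hi)
        have hcard' : B'.card ≤ k := by
          rw [hB', Finset.card_insert_of_notMem hnotin]
          have h1 : b' ∈ B.erase b := Finset.mem_erase.2 ⟨hbb'.symm, hb'B⟩
          rw [Finset.card_erase_of_mem h1, Finset.card_erase_of_mem hbB]
          have hB2 : 2 ≤ B.card := by
            have := Finset.one_lt_card.2 ⟨b, hbB, b', hb'B, hbb'⟩
            omega
          omega
        have hdisj' : (↑B' : Set (Finset ι)).Pairwise (fun a b => Disjoint a b) := by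
          intro x hx y hy hxy
          rw [hB', Finset.coe_insert, Set.mem_insert_iff] at hx hy
          rcases hx with rfl | hx
          · rcases hy with rfl | hy
            · exact absurd rfl hxy
            · obtain ⟨hyB, hyb, hyb'⟩ := hmem_ee _ hy
              exact Finset.disjoint_union_left.2
                ⟨hdisj hbB hyB hyb.symm, hdisj hb'B hyB hyb'.symm⟩
          · rcases hy with rfl | hy
            · obtain ⟨hxB, hxb, hxb'⟩ := hmem_ee _ hx
              exact Finset.disjoint_union_right.2
                ⟨hdisj hxB hbB hxb, hdisj hxB hb'B hxb'⟩
            · exact hdisj (hmem_ee _ hx).1 (hmem_ee _ hy).1 hxy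
        have hbne' : ∀ c ∈ B', c.Nonempty := by
          intro c hc
          rw [hB', Finset.mem_insert] at hc
          rcases hc with rfl | hc
          · obtain ⟨i, hi⟩ := hbne b hbB
            exact ⟨i, Finset.mem_union_left _ hi⟩
          · exact hbne c (hmem_ee _ hc).1
        have himg' : ∀ c ∈ B', Qc' ⊆ g '' (⋂ i ∈ c, Yf i) := by
          intro c hc
          rw [hB', Finset.mem_insert] at hc
          rcases hc with rfl | hc
          · rw [show (⋂ i ∈ b ∪ b', Yf i) = W (b ∪ b') from rfl, hWun]
            exact fun z hz => hz.2
          · exact (inter_subset_left).trans (himg c (hmem_ee _ hc).1)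
        have hsum' : m * n + 1 ≤ ∑ c ∈ B', c.card := by
          have heq : ∑ c ∈ B', c.card = ∑ c ∈ B, c.card := by
            rw [hB', Finset.sum_insert hnotin,
              Finset.card_union_of_disjoint hdbb']
            have h1 : b' ∈ B.erase b := Finset.mem_erase.2 ⟨hbb'.symm, hb'B⟩
            rw [show b.card + b'.card + ∑ c ∈ (B.erase b).erase b', c.card
                = b.card + (b'.card + ∑ c ∈ (B.erase b).erase b', c.card) by ring,
              Finset.add_sum_erase _ _ h1, Finset.add_sum_erase _ _ hbB]
          omega
        exact ih B' Qc' hcard' hdisj' hbne' hQ' himg' hsum'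

/-- If `f : X → Y` and `g : Y → Z` are continuous surjections between compact Hausdorff
spaces, `f` is `(m+1)`-tight and `g` is `(n+1)`-tight, then `g ∘ f` is `(mn+1)`-tight. -/
theorem stmt5 {X Y Z : Type u}
    [TopologicalSpace X] [CompactSpace X] [T2Space X]
    [TopologicalSpace Y] [CompactSpace Y] [T2Space Y]
    [TopologicalSpace Z] [CompactSpace Z] [T2Space Z]
    (m n : ℕ) (f : X → Y) (g : Y → Z)
    (hf : Continuous f) (hfs : Function.Surjective f)
    (hg : Continuous g) (hgs : Function.Surjective g)
    (htf : IsTightCard ((m + 1 : ℕ) : Cardinal.{u}) f)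
    (htg : IsTightCard ((n + 1 : ℕ) : Cardinal.{u}) g) :
    IsTightCard ((m * n + 1 : ℕ) : Cardinal.{u}) (g ∘ f) := by
  classical
  rintro ⟨Ps, ⟨hPdisj, hPcl, Q0, hQ0ns, hPimg⟩, hPcard⟩
  -- enumerate the loose family
  obtain ⟨e⟩ := Cardinal.mk_eq_nat_iff.1 hPcard
  set P : Fin (m * n + 1) → Set X := fun i => (e.symm i : Set X) with hP
  have hPinj : Function.Injective P := fun i j hij => by
    have := Subtype.ext hij
    exact e.symm.injective this
  have hPmem : ∀ i, P i ∈ Ps := fun i => (e.symm i).2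
  have hPclosed : ∀ i, IsClosed (P i) := fun i => hPcl _ (hPmem i)
  have hPdisj' : ∀ i j, i ≠ j → Disjoint (P i) (P j) := fun i j hij =>
    hPdisj (hPmem i) (hPmem j) (fun h => hij (hPinj h))
  set Yf : Fin (m * n + 1) → Set Y := fun i => f '' P i with hYf
  have hYcl : ∀ i, IsClosed (Yf i) := fun i =>
    (((hPclosed i).isCompact).image hf).isClosed
  have hYimg : ∀ i, g '' Yf i = Q0 := by
    intro i
    rw [hYf]
    simp only
    rw [← image_comp]
    exact hPimg _ (hPmem i)
  -- initial state for the core lemma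
  set B : Finset (Finset (Fin (m * n + 1))) :=
    Finset.univ.image (fun i => ({i} : Finset (Fin (m * n + 1)))) with hB
  have hBmem : ∀ b ∈ B, ∃ i, b = {i} := by
    intro b hb
    rw [hB, Finset.mem_image] at hb
    obtain ⟨i, _, rfl⟩ := hb
    exact ⟨i, rfl⟩
  have hres := core hg m n Yf hYcl B.card B Q0 le_rfl
    (by
      intro x hx y hy hxy
      obtain ⟨i, rfl⟩ := hBmem x hx
      obtain ⟨j, rfl⟩ := hBmem y hy
      simp only [Finset.disjoint_singleton]
      intro h
      exact hxy (by rw [h]))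
    (by
      intro b hb
      obtain ⟨i, rfl⟩ := hBmem b hb
      exact ⟨i, Finset.mem_singleton_self i⟩)
    hQ0ns
    (by
      intro b hb
      obtain ⟨i, rfl⟩ := hBmem b hb
      intro z hz
      rw [show (⋂ j ∈ ({i} : Finset (Fin (m * n + 1))), Yf j) = Yf i by simp]
      rw [hYimg i] at *
      exact (hYimg i) ▸ hz)
    (by
      rw [hB, Finset.sum_image (by intro x _ y _ h; simpa using h)]
      simp)
  rcases hres with ⟨S, R, hScard, hRcl, hRns, hRsub⟩ | ⟨Bs, N, hBcl, hBdisj, hNns, hNsub⟩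
  · -- contradiction with (m+1)-tightness of f
    obtain ⟨S', hS'sub, hS'card⟩ := Finset.exists_subset_card_eq hScard
    have hRne : R.Nonempty := nonscat_nonempty hRns
    set φ : Fin (m * n + 1) → Set X := fun i => P i ∩ f ⁻¹' R with hφ
    have hφimg : ∀ i ∈ S', f '' φ i = R := by
      intro i hi
      rw [hφ]
      simp only
      rw [image_inter_preimage]
      exact inter_eq_self_of_subset_right (hRsub i (hS'sub hi))
    have hφne : ∀ i ∈ S', (φ i).Nonempty := by
      intro i hi
      rw [← Set.image_nonempty (f := f), hφimg i hi]
      exact hRne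
    have hφinj : Set.InjOn φ ↑S' := by
      intro i hi j hj hij
      by_contra hne
      have hd : Disjoint (φ i) (φ j) :=
        (hPdisj' i j hne).mono inter_subset_left inter_subset_left
      rw [hij] at hd
      exact (hφne j hj).ne_empty (disjoint_self.1 hd)
    apply htf
    refine ⟨↑(S'.image φ), ⟨?_, ?_, R, hRns, ?_⟩, ?_⟩
    · intro x hx y hy hxy
      rw [Finset.coe_image] at hx hy
      obtain ⟨i, hi, rfl⟩ := hx
      obtain ⟨j, hj, rfl⟩ := hy
      have hne : i ≠ j := fun h => hxy (by rw [h])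
      exact (hPdisj' i j hne).mono inter_subset_left inter_subset_left
    · intro Q hQ
      rw [Finset.coe_image] at hQ
      obtain ⟨i, _, rfl⟩ := hQ
      exact (hPclosed i).inter (hRcl.preimage hf)
    · intro Q hQ
      rw [Finset.coe_image] at hQ
      obtain ⟨i, hi, rfl⟩ := hQ
      exact hφimg i hi
    · have h1 : (Finset.image φ S').card = m + 1 := by
        rw [Finset.card_image_of_injOn hφinj, hS'card]
      rw [← h1]
      exact Cardinal.mk_coe_finset
  · -- contradiction with (n+1)-tightness of g
    set E : Set Z := ⋂ s, g '' Bs s with hE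
    have hEcl : IsClosed E :=
      isClosed_iInter fun s => (((hBcl s).isCompact).image hg).isClosed
    have hNE : N ⊆ E := subset_iInter fun s => hNsub s
    have hEns : ¬ IsScatteredSet E := fun h => hNns (isScattered_mono h hNE)
    have hEne : E.Nonempty := nonscat_nonempty hEns
    set Bs' : Fin (n + 1) → Set Y := fun s => Bs s ∩ g ⁻¹' E with hBs'
    have hBs'img : ∀ s, g '' Bs' s = E := by
      intro s
      rw [hBs']
      simp only
      rw [image_inter_preimage]
      exact inter_eq_self_of_subset_right (iInter_subset _ s)
    have hBs'ne : ∀ s, (Bs' s).Nonempty := by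
      intro s
      rw [← Set.image_nonempty (f := g), hBs'img s]
      exact hEne
    have hBs'disj : ∀ s t, s ≠ t → Disjoint (Bs' s) (Bs' t) := fun s t hst =>
      (hBdisj hst).mono inter_subset_left inter_subset_left
    have hBs'inj : Function.Injective Bs' := by
      intro s t hst
      by_contra hne
      have := hBs'disj s t hne
      rw [hst] at this
      exact (hBs'ne t).ne_empty (disjoint_self.1 this)
    apply htg
    refine ⟨Set.range Bs', ⟨?_, ?_, E, hEns, ?_⟩, ?_⟩
    · rintro x ⟨s, rfl⟩ y ⟨t, rfl⟩ hxy
      exact hBs'disj s t (fun h => hxy (by rw [h]))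
    · rintro Q ⟨s, rfl⟩
      exact (hBcl s).inter (hEcl.preimage hg)
    · rintro Q ⟨s, rfl⟩
      exact hBs'img s
    · exact Cardinal.mk_eq_nat_iff.2 ⟨(Equiv.ofInjective Bs' hBs'inj).symm⟩
end

section
/- Let X, Y be compact Hausdorff spaces and f : X → Y a continuous surjection. Assume that the topological weight of X is strictly less than 2^ℵ₀, that Y is metrizable and not scattered, and that f is weakly c-tight. Then X has a subset homeomorphic to the Cantor space 2^ω. -/
open Set Topology

universe u

/-- The topological weight of a space: the least cardinality of a topological basis. -/
noncomputable def topWeight (X : Type u) [TopologicalSpace X] : Cardinal.{u} :=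
  sInf {κ : Cardinal.{u} | ∃ B : Set (Set X),
    TopologicalSpace.IsTopologicalBasis B ∧ Cardinal.mk B = κ}

/-! Suppose `X` contains no Cantor set. Since `w(X) < 𝔠`, every closed `D ⊆ X` whose image
contains a nonempty perfect `K` splits into disjoint closed `D₀, D₁` whose images still share a
nonempty perfect subset of `K`. Iterating this along the binary tree, while also splitting the
perfect sets in `Y`, gives closed sets `D s` and perfect sets `K t` (`s, t ∈ 2ⁿ`) with
`K t ⊆ f '' D s`; reading off the branch of a point of `⋂ₙ ⋃ₛ D s` is then a `2^ω`-loose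
function over the uncountable closed set `⋂ₙ ⋃ₜ K t`, contradicting weak c-tightness. -/

open Cardinal Function TopologicalSpace

theorem Perfect.not_isScatteredSet {α : Type*} [TopologicalSpace α] {P : Set α} (hP : Perfect P)
    (hne : P.Nonempty) : ¬ IsScatteredSet P := by
  intro h
  obtain ⟨x, hx, U, hU, hUP⟩ := h P subset_rfl hne
  have hxU : x ∈ U := (hUP.ge rfl).1
  obtain ⟨y, hy, hyx⟩ := accPt_iff_nhds.1 (hP.acc x hx) U (hU.mem_nhds hxU)
  exact hyx (hUP.le hy)

theorem exists_perfect_nonempty_of_not_isScatteredSet {α : Type*} [TopologicalSpace α]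
    {S : Set α} (hS : ¬ IsScatteredSet S) : ∃ P : Set α, Perfect P ∧ P.Nonempty := by
  simp only [IsScatteredSet, not_forall, not_exists, not_and] at hS
  obtain ⟨T, -, hTne, hT⟩ := hS
  refine ⟨closure T, Preperfect.perfect_closure fun x hx => ?_, hTne.closure⟩
  refine accPt_iff_nhds.2 fun U hU => ?_
  obtain ⟨O, hOU, hO, hxO⟩ := mem_nhds_iff.1 hU
  by_contra! h
  refine hT x hx O hO (Set.Subsingleton.eq_singleton_of_mem (fun a ha b hb => ?_) ⟨hxO, hx⟩)
  exact (h a ⟨hOU ha.1, ha.2⟩).trans (h b ⟨hOU hb.1, hb.2⟩).symm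

theorem not_countable_univ_nat_bool : ¬ (univ : Set (ℕ → Bool)).Countable := by
  rw [countable_univ_iff, ← mk_le_aleph0_iff]
  simpa using Cardinal.aleph0_lt_continuum

/-- `j` parametrises a slice `{a} × 2^ω` of `2^ω × 2^ω ≃ 2^ω` inside a Cantor set in `K`: fewer
than `𝔠` points of `B` cannot meet all `𝔠` disjoint slices. -/
theorem Perfect.exists_nat_bool_injection_disjoint {α : Type*} [MetricSpace α] [CompleteSpace α]
    {K B : Set α} (hK : Perfect K) (hne : K.Nonempty) (hB : #B < 𝔠) :
    ∃ j : (ℕ → Bool) → α, range j ⊆ K ∧ Continuous j ∧ Injective j ∧ Disjoint (range j) B := by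
  obtain ⟨j₀, hj₀K, hj₀, hj₀inj⟩ := hK.exists_nat_bool_injection hne
  let e : (ℕ → Bool) × (ℕ → Bool) ≃ₜ (ℕ → Bool) :=
    Homeomorph.sumArrowHomeomorphProdArrow.symm.trans
      (Homeomorph.piCongrLeft (Y := fun _ => Bool) Equiv.natSumNatEquivNat)
  have hinj : Injective (j₀ ∘ e) := hj₀inj.comp e.injective
  obtain ⟨a, ha⟩ : ∃ a, ∀ c, j₀ (e (a, c)) ∉ B := by
    by_contra! h
    choose c hc using h
    have : 𝔠 ≤ #B := by
      simpa using lift_mk_le_lift_mk_of_injective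
        (f := fun a => (⟨j₀ (e (a, c a)), hc a⟩ : B)) fun a a' h => congrArg Prod.fst
          (hinj (congrArg Subtype.val h))
    exact this.not_gt hB
  refine ⟨fun c => j₀ (e (a, c)), ?_, ?_, fun c c' h => congrArg Prod.snd (hinj h), ?_⟩
  · exact (range_subset_iff.2 fun c => mem_range_self _).trans hj₀K
  · fun_prop
  · exact disjoint_left.2 fun _ ⟨c, hc⟩ => hc ▸ ha c

theorem Perfect.exists_bool_splitting {Y : Type*} [TopologicalSpace Y] [T25Space Y]
    {K : Set Y} (hK : Perfect K) (hne : K.Nonempty) :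
    ∃ C : Bool → Set Y, (∀ b, Perfect (C b) ∧ (C b).Nonempty ∧ C b ⊆ K) ∧
      Pairwise (Disjoint on C) := by
  obtain ⟨C₀, C₁, h₀, h₁, hC⟩ := hK.splitting hne
  exact ⟨fun b => cond b C₁ C₀, Bool.forall_bool.2 ⟨h₀, h₁⟩, pairwise_on_bool.2 hC.symm⟩

theorem TopologicalSpace.IsTopologicalBasis.exists_disjoint_closure {X : Type*}
    [TopologicalSpace X] [T25Space X] {B : Set (Set X)} (hB : IsTopologicalBasis B) {x y : X}
    (h : x ≠ y) :
    ∃ U ∈ B, ∃ V ∈ B, x ∈ U ∧ y ∈ V ∧ Disjoint (closure U) (closure V) := by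
  obtain ⟨s, hs, t, ht, hst⟩ := exists_nhds_disjoint_closure h
  obtain ⟨U, hUB, hxU, hUs⟩ := hB.mem_nhds_iff.1 hs
  obtain ⟨V, hVB, hyV, hVt⟩ := hB.mem_nhds_iff.1 ht
  exact ⟨U, hUB, V, hVB, hxU, hyV, hst.mono (closure_mono hUs) (closure_mono hVt)⟩

theorem exists_isTopologicalBasis_mk_eq_topWeight (X : Type u) [TopologicalSpace X] :
    ∃ B : Set (Set X), IsTopologicalBasis B ∧ #B = topWeight X :=
  csInf_mem (s := {κ | ∃ B : Set (Set X), IsTopologicalBasis B ∧ #B = κ})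
    ⟨_, _, isTopologicalBasis_opens, rfl⟩

theorem Cardinal.mk_iUnion_lt_continuum {α ι : Type u} {s : ι → Set α} (hι : #ι < 𝔠)
    (hs : ∀ i, (s i).Countable) : #(⋃ i, s i) < 𝔠 :=
  calc #(⋃ i, s i) ≤ #ι * ⨆ i, #(s i) := mk_iUnion_le s
    _ ≤ #ι * ℵ₀ := by gcongr; exact ciSup_le' fun i => mk_le_aleph0_iff.2 (hs i).to_subtype
    _ < 𝔠 := mul_lt_of_lt aleph0_le_continuum hι aleph0_lt_continuum

theorem continuous_of_preimage_inter_eq_singleton {X Y Z : Type*} [TopologicalSpace X]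
    [CompactSpace X] [TopologicalSpace Y] [T2Space Y] [TopologicalSpace Z] {f : X → Y}
    (hf : Continuous f) {D : Set X} (hD : IsClosed D) {j : Z → Y} (hj : Continuous j)
    {ψ : Z → X} (hψ : ∀ z, f ⁻¹' {j z} ∩ D = {ψ z}) : Continuous ψ := by
  refine continuous_iff_isClosed.2 fun F hF => ?_
  have : ψ ⁻¹' F = j ⁻¹' (f '' (D ∩ F)) := by
    ext z
    constructor
    · intro hz
      have := (hψ z).ge rfl
      exact ⟨ψ z, ⟨this.2, hz⟩, this.1⟩
    · rintro ⟨x, ⟨hxD, hxF⟩, hx⟩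
      obtain rfl : x = ψ z := (hψ z).le ⟨hx, hxD⟩
      exact hxF
  rw [this]
  exact ((hD.inter hF).isCompact.image hf).isClosed.preimage hj

theorem exists_continuous_injective_of_fibers_subsingleton {X Y : Type*} [TopologicalSpace X]
    [CompactSpace X] [MetricSpace Y] [CompleteSpace Y] {f : X → Y} (hf : Continuous f)
    {D : Set X} (hD : IsClosed D) {K B : Set Y} (hK : Perfect K) (hne : K.Nonempty)
    (hKD : K ⊆ f '' D) (hB : #B < 𝔠) (hfib : ∀ y ∈ K \ B, (f ⁻¹' {y} ∩ D).Subsingleton) :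
    ∃ ψ : (ℕ → Bool) → X, Continuous ψ ∧ Injective ψ := by
  obtain ⟨j, hjK, hj, hjinj, hjB⟩ := hK.exists_nat_bool_injection_disjoint hne hB
  have hfiber : ∀ σ, ∃ x, f ⁻¹' {j σ} ∩ D = {x} := by
    intro σ
    obtain ⟨x, hxD, hx⟩ := hKD (hjK (mem_range_self σ))
    exact exists_eq_singleton_iff_nonempty_subsingleton.2 ⟨⟨x, hx, hxD⟩,
      hfib _ ⟨hjK (mem_range_self σ), disjoint_left.1 hjB (mem_range_self σ)⟩⟩
  choose ψ hψ using hfiber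
  have hfψ : ∀ σ, f (ψ σ) = j σ := fun σ => ((hψ σ).ge rfl).1
  refine ⟨ψ, continuous_of_preimage_inter_eq_singleton hf hD hj hψ, fun σ τ h => hjinj ?_⟩
  rw [← hfψ σ, ← hfψ τ, h]

section Splitting

variable {X Y : Type*} [TopologicalSpace X]

structure IsSplitting (f : X → Y) (D : Set X) (P : Set Y) (E : Bool → Set X) : Prop where
  isClosed : ∀ b, IsClosed (E b)
  subset : ∀ b, E b ⊆ D
  pairwise_disjoint : Pairwise (Disjoint on E)
  subset_image : ∀ b, P ⊆ f '' E b

theorem IsSplitting.mono {f : X → Y} {D : Set X} {P P' : Set Y} {E : Bool → Set X}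
    (h : IsSplitting f D P E) (hP : P' ⊆ P) : IsSplitting f D P' E :=
  ⟨h.isClosed, h.subset, h.pairwise_disjoint, fun b => hP.trans (h.subset_image b)⟩

variable [TopologicalSpace Y]

def SplitsPerfectSets (f : X → Y) : Prop :=
  ∀ ⦃D : Set X⦄, IsClosed D → ∀ ⦃K : Set Y⦄, Perfect K → K.Nonempty → K ⊆ f '' D →
    ∃ P ⊆ K, Perfect P ∧ P.Nonempty ∧ ∃ E, IsSplitting f D P E

theorem SplitsPerfectSets.exists_common {f : X → Y} (hsplit : SplitsPerfectSets f)
    {ι : Type*} [Finite ι] {D : ι → Set X} (hD : ∀ i, IsClosed (D i)) {K : Set Y}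
    (hK : Perfect K) (hne : K.Nonempty) (hKD : ∀ i, K ⊆ f '' D i) :
    ∃ P ⊆ K, Perfect P ∧ P.Nonempty ∧
      ∃ E : ι → Bool → Set X, ∀ i, IsSplitting f (D i) P (E i) := by
  classical
  have := Fintype.ofFinite ι
  suffices ∀ s : Finset ι, ∃ P ⊆ K, Perfect P ∧ P.Nonempty ∧
      ∃ E : ι → Bool → Set X, ∀ i ∈ s, IsSplitting f (D i) P (E i) by
    simpa using this Finset.univ
  intro s
  induction s using Finset.induction_on with
  | empty => exact ⟨K, subset_rfl, hK, hne, fun _ _ => ∅, by simp⟩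
  | insert a s _ ih =>
    obtain ⟨P, hPK, hP, hPne, E, hE⟩ := ih
    obtain ⟨P', hP'P, hP', hP'ne, Ea, hEa⟩ := hsplit (hD a) hP hPne (hPK.trans (hKD a))
    refine ⟨P', hP'P.trans hPK, hP', hP'ne, update E a Ea, fun i hi => ?_⟩
    by_cases hia : i = a
    · subst hia
      simpa using hEa
    · rw [update_of_ne hia]
      exact (hE i ((Finset.mem_insert.1 hi).resolve_left hia)).mono hP'P

end Splitting

/-- Either some pair of basic sets with disjoint closures has images over `D` meeting in
uncountably many points of `K`, and these contain a perfect set; or fewer than `𝔠` points of `K`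
have two preimages in `D`, and then a Cantor set in `K` avoiding them lifts continuously
to `X`. -/
theorem splitsPerfectSets_of_forall_not_injective {X Y : Type u} [TopologicalSpace X]
    [CompactSpace X] [T2Space X] [TopologicalSpace Y] [CompactSpace Y] [MetrizableSpace Y]
    {f : X → Y} (hf : Continuous f) {B : Set (Set X)} (hB : IsTopologicalBasis B)
    (hBc : #B < 𝔠) (hX : ∀ ψ : (ℕ → Bool) → X, Continuous ψ → ¬ Injective ψ) :
    SplitsPerfectSets f := by
  intro D hD K hK hne hKD
  let _ := metrizableSpaceMetric Y
  let I := {p : B × B // Disjoint (closure (p.1 : Set X)) (closure (p.2 : Set X))}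
  let N (p : I) : Set Y := f '' (D ∩ closure p.1.1) ∩ f '' (D ∩ closure p.1.2) ∩ K
  by_cases hN : ∃ p, ¬ (N p).Countable
  · obtain ⟨p, hp⟩ := hN
    have hpiece : ∀ U : Set X, IsClosed (D ∩ closure U) := fun U => hD.inter isClosed_closure
    have hNc : IsClosed (N p) :=
      ((((hpiece _).isCompact.image hf).isClosed).inter
        ((hpiece _).isCompact.image hf).isClosed).inter hK.closed
    obtain ⟨P, hP, hPne, hPN⟩ := exists_perfect_nonempty_of_isClosed_of_not_countable hNc hp
    refine ⟨P, fun y hy => (hPN hy).2, hP, hPne,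
      fun b => cond b (D ∩ closure p.1.1) (D ∩ closure p.1.2),
      ⟨Bool.forall_bool.2 ⟨hpiece _, hpiece _⟩,
        Bool.forall_bool.2 ⟨inter_subset_left, inter_subset_left⟩,
        pairwise_on_bool.2 (p.2.mono inter_subset_right inter_subset_right),
        Bool.forall_bool.2 ⟨fun y hy => (hPN hy).1.2, fun y hy => (hPN hy).1.1⟩⟩⟩
  · push Not at hN
    have hI : #I < 𝔠 :=
      (mk_subtype_le _).trans_lt (by simpa using mul_lt_of_lt aleph0_le_continuum hBc hBc)
    refine (exists_continuous_injective_of_fibers_subsingleton hf hD hK hne hKD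
      (mk_iUnion_lt_continuum hI hN) ?_).elim fun ψ ⟨hψ, hinj⟩ => (hX ψ hψ hinj).elim
    rintro y ⟨hyK, hyN⟩ x ⟨hx, hxD⟩ x' ⟨hx', hx'D⟩
    by_contra hxx
    obtain ⟨U, hU, V, hV, hxU, hx'V, hUV⟩ := hB.exists_disjoint_closure hxx
    exact hyN (mem_iUnion.2 ⟨⟨(⟨U, hU⟩, ⟨V, hV⟩), hUV⟩,
      ⟨⟨x, ⟨hxD, subset_closure hxU⟩, hx⟩, ⟨x', ⟨hx'D, subset_closure hx'V⟩, hx'⟩⟩, hyK⟩)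

theorem Fin.apply_last_ne_of_init_eq {α : Type*} {n : ℕ} {u v : Fin (n + 1) → α} (huv : u ≠ v)
    (h : Fin.init u = Fin.init v) : u (Fin.last n) ≠ v (Fin.last n) := fun hl =>
  huv (by rw [← Fin.snoc_init_self u, ← Fin.snoc_init_self v, h, hl])

theorem pairwise_disjoint_init_last {α β : Type*} {n : ℕ} {F : (Fin n → β) → Set α}
    {H : (Fin n → β) → β → Set α} (hF : Pairwise (Disjoint on F))
    (hH : ∀ s, Pairwise (Disjoint on H s)) (hHF : ∀ s b, H s b ⊆ F s) :
    Pairwise (Disjoint on fun u : Fin (n + 1) → β => H (Fin.init u) (u (Fin.last n))) := by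
  intro u v huv
  by_cases h : Fin.init u = Fin.init v
  · simp only [onFun, h]
    exact hH _ (Fin.apply_last_ne_of_init_eq huv h)
  · exact (hF h).mono (hHF _ _) (hHF _ _)

theorem exists_dependent_seq {P : ℕ → Type*} (R : ∀ n, P n → P (n + 1) → Prop) (a₀ : P 0)
    (h : ∀ n a, ∃ b, R n a b) : ∃ a : ∀ n, P n, ∀ n, R n (a n) (a (n + 1)) := by
  choose g hg using h
  exact ⟨fun n => Nat.rec a₀ g n, fun n => hg n _⟩

section Stage

variable {X Y : Type*} [TopologicalSpace X] [TopologicalSpace Y] (f : X → Y)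

/-- The `n`-th stage of the construction of a loose function: the pieces `D s` will carry the
points of `X` whose value begins with `s`, and every `y ∈ K t` must have preimages in all of
them. -/
structure LooseStage (n : ℕ) where
  D : (Fin n → Bool) → Set X
  K : (Fin n → Bool) → Set Y
  isClosed_D : ∀ s, IsClosed (D s)
  pairwise_disjoint_D : Pairwise (Disjoint on D)
  perfect_K : ∀ t, Perfect (K t)
  nonempty_K : ∀ t, (K t).Nonempty
  pairwise_disjoint_K : Pairwise (Disjoint on K)
  K_subset_image_D : ∀ s t, K t ⊆ f '' D s

variable {f}

def LooseStage.Refines {n : ℕ} (S' : LooseStage f (n + 1)) (S : LooseStage f n) : Prop :=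
  ∀ u, S'.D u ⊆ S.D (Fin.init u) ∧ S'.K u ⊆ S.K (Fin.init u)

def LooseStage.zero (hf : Surjective f) {K : Set Y} (hK : Perfect K) (hne : K.Nonempty) :
    LooseStage f 0 where
  D _ := univ
  K _ := K
  isClosed_D _ := isClosed_univ
  pairwise_disjoint_D s t hst := (hst (Subsingleton.elim s t)).elim
  perfect_K _ := hK
  nonempty_K _ := hne
  pairwise_disjoint_K s t hst := (hst (Subsingleton.elim s t)).elim
  K_subset_image_D _ _ := by simp [image_univ, hf.range_eq]

/-- Each `K t` is first shrunk to a perfect `P t` over which all `D s` split; the new pieces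
above `D s` collect the splittings over the various `P t`, which stay apart because the
`P t` do, and each `P t` is split in two to give the new `K`. -/
theorem LooseStage.exists_refines [T25Space Y] (hf : Continuous f) (hsplit : SplitsPerfectSets f)
    {n : ℕ} (S : LooseStage f n) : ∃ S' : LooseStage f (n + 1), S'.Refines S := by
  choose P hPK hP hPne E hE using fun t =>
    hsplit.exists_common S.isClosed_D (S.perfect_K t) (S.nonempty_K t)
      fun s => S.K_subset_image_D s t
  choose C hC hCdisj using fun t => (hP t).exists_bool_splitting (hPne t)
  let H (s : Fin n → Bool) (b : Bool) : Set X := ⋃ t, E t s b ∩ f ⁻¹' P t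
  have hHD : ∀ s b, H s b ⊆ S.D s := fun s b =>
    iUnion_subset fun t => inter_subset_left.trans ((hE t s).subset b)
  have hHdisj : ∀ s, Pairwise (Disjoint on H s) := by
    intro s b b' hbb'
    refine disjoint_iUnion_left.2 fun t => disjoint_iUnion_right.2 fun t' => ?_
    by_cases htt' : t = t'
    · subst htt'
      exact ((hE t s).pairwise_disjoint hbb').mono inter_subset_left inter_subset_left
    · exact (((S.pairwise_disjoint_K htt').mono (hPK t) (hPK t')).preimage f).mono
        inter_subset_right inter_subset_right
  have hPH : ∀ s b t, P t ⊆ f '' H s b := fun s b t y hy => by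
    obtain ⟨x, hx, rfl⟩ := (hE t s).subset_image b hy
    exact ⟨x, mem_iUnion.2 ⟨t, hx, hy⟩, rfl⟩
  refine ⟨⟨fun u => H (Fin.init u) (u (Fin.last n)), fun u => C (Fin.init u) (u (Fin.last n)),
    fun u => isClosed_iUnion_of_finite fun t =>
      ((hE t _).isClosed _).inter ((hP t).closed.preimage hf),
    pairwise_disjoint_init_last S.pairwise_disjoint_D hHdisj hHD,
    fun u => (hC _ _).1, fun u => (hC _ _).2.1,
    pairwise_disjoint_init_last S.pairwise_disjoint_K hCdisj
      fun t b => (hC t b).2.2.trans (hPK t),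
    fun u v => (hC _ _).2.2.trans (hPH _ _ _)⟩,
    fun u => ⟨hHD _ _, (hC _ _).2.2.trans (hPK _)⟩⟩

end Stage

namespace LooseStage

variable {X Y : Type*} [TopologicalSpace X] [TopologicalSpace Y] {f : X → Y}
  (S : ∀ n, LooseStage f n)

def branch (σ : ℕ → Bool) (n : ℕ) : Fin n → Bool := fun i => σ i

def limD : Set X := ⋂ n, ⋃ s, (S n).D s

def limK : Set Y := ⋂ n, ⋃ t, (S n).K t

noncomputable def limMap (x : X) (k : ℕ) : Bool :=
  (⋃ (s : Fin (k + 1) → Bool) (_ : s (Fin.last k) = true), (S (k + 1)).D s).boolIndicator x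

theorem isClosed_limD : IsClosed (limD S) :=
  isClosed_iInter fun n => isClosed_iUnion_of_finite (S n).isClosed_D

theorem isClosed_limK : IsClosed (limK S) :=
  isClosed_iInter fun n => isClosed_iUnion_of_finite fun t => ((S n).perfect_K t).closed

theorem limMap_eq_of_mem {x : X} {k : ℕ} {s : Fin (k + 1) → Bool} (hx : x ∈ (S (k + 1)).D s) :
    limMap S x k = s (Fin.last k) := by
  cases hs : s (Fin.last k)
  · refine (notMem_iff_boolIndicator _ _).1 fun hx' => ?_
    obtain ⟨t, ht, hxt⟩ := mem_iUnion₂.1 hx'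
    have hst : s ≠ t := fun h => by simp [h, ht] at hs
    exact disjoint_left.1 ((S (k + 1)).pairwise_disjoint_D hst) hx hxt
  · exact (mem_iff_boolIndicator _ _).1 (mem_iUnion₂.2 ⟨s, hs, hx⟩)

theorem continuousOn_limMap : ContinuousOn (limMap S) (limD S) :=
  continuousOn_pi.2 fun k =>
    ((locallyFinite_of_finite _).continuousOn_iUnion (S (k + 1)).isClosed_D fun _ =>
      continuousOn_const.congr fun _ hx => limMap_eq_of_mem S hx).mono
      fun _ hx => mem_iInter.1 hx (k + 1)

variable {S} (hS : ∀ n, (S (n + 1)).Refines (S n))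
include hS

theorem not_countable_limK [CompactSpace Y] : ¬ (limK S).Countable := by
  have hbranch : ∀ σ, (⋂ n, (S n).K (branch σ n)).Nonempty := fun σ =>
    IsCompact.nonempty_iInter_of_sequence_nonempty_isCompact_isClosed _ (fun n => (hS n _).2)
      (fun n => (S n).nonempty_K _) ((S 0).perfect_K _).closed.isCompact
      fun n => ((S n).perfect_K _).closed
  choose y hy using hbranch
  have hyK : ∀ σ, y σ ∈ limK S := fun σ =>
    mem_iInter.2 fun n => mem_iUnion.2 ⟨_, mem_iInter.1 (hy σ) n⟩
  have hinj : Injective y := by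
    intro σ τ h
    by_contra hστ
    obtain ⟨k, hk⟩ := Function.ne_iff.1 hστ
    have hbr : branch σ (k + 1) ≠ branch τ (k + 1) := fun h' => hk (congrFun h' (Fin.last k))
    exact disjoint_left.1 ((S (k + 1)).pairwise_disjoint_K hbr) (mem_iInter.1 (hy σ) (k + 1))
      (h ▸ mem_iInter.1 (hy τ) (k + 1))
  exact fun hc => not_countable_univ_nat_bool
    (MapsTo.countable_of_injOn (fun σ _ => hyK σ) hinj.injOn hc)

theorem mem_limMap_image_preimage [CompactSpace X] [T1Space Y] (hf : Continuous f) {y : Y}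
    (hy : y ∈ limK S) (σ : ℕ → Bool) : σ ∈ limMap S '' (f ⁻¹' {y} ∩ limD S) := by
  let F n := f ⁻¹' {y} ∩ (S n).D (branch σ n)
  have hF : ∀ n, IsClosed (F n) := fun n =>
    (isClosed_singleton.preimage hf).inter ((S n).isClosed_D _)
  have hFne : ∀ n, (F n).Nonempty := fun n => by
    obtain ⟨t, ht⟩ := mem_iUnion.1 (mem_iInter.1 hy n)
    obtain ⟨x, hx, hxy⟩ := (S n).K_subset_image_D (branch σ n) t ht
    exact ⟨x, hxy, hx⟩
  obtain ⟨x, hx⟩ := IsCompact.nonempty_iInter_of_sequence_nonempty_isCompact_isClosed F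
    (fun n => inter_subset_inter_right _ (hS n _).1) hFne (hF 0).isCompact hF
  rw [mem_iInter] at hx
  exact ⟨x, ⟨(hx 0).1, mem_iInter.2 fun n => mem_iUnion.2 ⟨_, (hx n).2⟩⟩,
    funext fun k => limMap_eq_of_mem S (hx (k + 1)).2⟩

theorem exists_looseFunction [CompactSpace X] [CompactSpace Y] [T1Space Y]
    [SecondCountableTopology Y] (hf : Continuous f) :
    ∃ (D : Set X) (φ : X → ℕ → Bool), LooseFunction f D φ := by
  obtain ⟨P, hP, hPne, hPK⟩ :=
    exists_perfect_nonempty_of_isClosed_of_not_countable (isClosed_limK S) (not_countable_limK hS)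
  exact ⟨limD S, limMap S, isClosed_limD S, continuousOn_limMap S, P, hP.not_isScatteredSet hPne,
    fun y hy => eq_univ_of_forall (mem_limMap_image_preimage hS hf (hPK hy))⟩

end LooseStage

/-- If `f : X → Y` is a weakly c-tight continuous surjection of compact Hausdorff spaces,
`w(X) < 2^ℵ₀`, and `Y` is metrizable and not scattered, then `X` contains a copy of the
Cantor space. -/
theorem stmt8 {X Y : Type u}
    [TopologicalSpace X] [CompactSpace X] [T2Space X]
    [TopologicalSpace Y] [CompactSpace Y] [TopologicalSpace.MetrizableSpace Y]
    (f : X → Y) (hf : Continuous f) (hsurj : Function.Surjective f)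
    (hw : topWeight X < Cardinal.continuum)
    (hY : ¬ IsScatteredSet (Set.univ : Set Y))
    (ht : WeaklyCTight f) :
    ∃ S : Set X, Nonempty ((ℕ → Bool) ≃ₜ S) := by
  by_contra hX
  have hcantor : ∀ ψ : (ℕ → Bool) → X, Continuous ψ → ¬ Injective ψ := fun ψ hψ hinj =>
    hX ⟨range ψ, ⟨(hψ.isClosedEmbedding hinj).isEmbedding.toHomeomorph⟩⟩
  obtain ⟨B, hB, hBw⟩ := exists_isTopologicalBasis_mk_eq_topWeight X
  have hsplit : SplitsPerfectSets f :=
    splitsPerfectSets_of_forall_not_injective hf hB (hBw ▸ hw) hcantor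
  obtain ⟨K, hK, hKne⟩ := exists_perfect_nonempty_of_not_isScatteredSet hY
  obtain ⟨S, hS⟩ := exists_dependent_seq (fun _ S S' => S'.Refines S)
    (LooseStage.zero hsurj hK hKne) fun _ S => S.exists_refines hf hsplit
  exact ht (LooseStage.exists_looseFunction hS hf)
end

section
/- Every compact LOTS is dissipated: if X is a compact LOTS, then for every continuous map g from X to a compact metrizable space Z there exist a compact metrizable space Y and a tight continuous map f : X → Y finer than g. -/
open Set Topology

universe u

/-!
Collapse every maximal interval on which `g` is constant to a point. The quotient `Y` is again a
compact LOTS, the quotient map `f : X → Y` is monotone and continuous, and `g` factors through it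
as `g' ∘ f`. A monotone map on a compact LOTS is tight, because two disjoint closed sets can only
share finitely many fibres. The space `Y` is metrizable because `g'` is not constant on any
nondegenerate interval: for each `n`, finitely many convex open sets on which `g'` varies by less
than `1 / n` cover `Y`, and the first points to the right of these sets (and, dually, to the left)
form a countable set that is order-dense in `Y` from both sides, so the open rays it bounds form a
countable subbase.
-/

open Set TopologicalSpace

theorem Set.Finite.isScatteredSet {X : Type*} [TopologicalSpace X] [T1Space X] {S : Set X}
    (hS : S.Finite) : IsScatteredSet S := by
  rintro T hTS ⟨x, hx⟩
  refine ⟨x, hx, (T \ {x})ᶜ, ((hS.subset hTS).sdiff.isClosed).isOpen_compl, ?_⟩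
  ext y
  by_cases hyx : y = x <;> simp [hyx, hx]

section Order

variable {X Z : Type*} {g : X → Z}

theorem subsingleton_image_iff_forall_eq {s : Set X} {a : X} (ha : a ∈ s) :
    (g '' s).Subsingleton ↔ ∀ c ∈ s, g c = g a :=
  ⟨fun hs c hc => hs (mem_image_of_mem g hc) (mem_image_of_mem g ha), by
    rintro h _ ⟨b, hb, rfl⟩ _ ⟨c, hc, rfl⟩
    rw [h b hb, h c hc]⟩

theorem exists_ne_of_not_subsingleton_image {s : Set X} {a : X} (ha : a ∈ s)
    (hs : ¬ (g '' s).Subsingleton) : ∃ c ∈ s, g c ≠ g a := by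
  simpa [subsingleton_image_iff_forall_eq ha] using hs

variable [LinearOrder X]

theorem subsingleton_image_Icc_of_le {a b : X} (h : b ≤ a) : (g '' Icc a b).Subsingleton :=
  (subsingleton_singleton.image g).anti (image_mono fun _ hc => le_antisymm (hc.2.trans h) hc.1)

theorem subsingleton_image_Icc_trans {a b c : X} (hab : (g '' Icc a b).Subsingleton)
    (hbc : (g '' Icc b c).Subsingleton) : (g '' Icc a c).Subsingleton := by
  rcases lt_or_ge b a with hba | hab'
  · exact hbc.anti (image_mono (Icc_subset_Icc_left hba.le))
  rcases lt_or_ge c b with hcb | hbc'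
  · exact hab.anti (image_mono (Icc_subset_Icc_right hcb.le))
  rw [← Icc_union_Icc_eq_Icc hab' hbc',
    subsingleton_image_iff_forall_eq (mem_union_left _ (right_mem_Icc.2 hab'))]
  rintro d (hd | hd)
  exacts [(subsingleton_image_iff_forall_eq (right_mem_Icc.2 hab')).1 hab d hd,
    (subsingleton_image_iff_forall_eq (left_mem_Icc.2 hbc')).1 hbc d hd]

theorem image_comp_ofDual_Icc (a b : Xᵒᵈ) :
    (g ∘ OrderDual.ofDual) '' Icc a b = g '' Icc (OrderDual.ofDual b) (OrderDual.ofDual a) := by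
  rw [← OrderDual.toDual_ofDual a, ← OrderDual.toDual_ofDual b, Icc_toDual, image_comp,
    OrderDual.ofDual.image_preimage]
  rfl

theorem Monotone.mem_or_mem_of_lt {Y : Type*} [LinearOrder Y] {f : X → Y} (hf : Monotone f)
    {C C' : Set X} [C.OrdConnected] [C'.OrdConnected] {p₁ p₂ q₁ q₂ : X} (hp₁ : p₁ ∈ C)
    (hq₁ : q₁ ∈ C) (hp₂ : p₂ ∈ C') (hq₂ : q₂ ∈ C') (hp : f p₁ = f p₂) (hq : f q₁ = f q₂)
    (hlt : f p₁ < f q₁) : p₂ ∈ C ∨ p₁ ∈ C' := by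
  rcases le_total p₁ p₂ with h | h
  · exact Or.inl (Set.Icc_subset C hp₁ hq₁ ⟨h, (hf.reflect_lt (hp ▸ hlt)).le⟩)
  · exact Or.inr (Set.Icc_subset C' hp₂ hq₂ ⟨h, (hf.reflect_lt (hq ▸ hlt)).le⟩)

end Order

section OrderTopology

variable {X : Type*} [LinearOrder X] [TopologicalSpace X] [OrderTopology X]

theorem IsOpen.ordConnectedComponent {U : Set X} (hU : IsOpen U) (x : X) :
    IsOpen (ordConnectedComponent U x) :=
  isOpen_iff_mem_nhds.2 fun _ hy => ordConnectedComponent_eq hy ▸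
    ordConnectedComponent_mem_nhds.2 (hU.mem_nhds (ordConnectedComponent_subset hy))

theorem exists_finset_forall_mem_ordConnectedComponent [CompactSpace X] {U : X → Set X}
    (hU : ∀ x, IsOpen (U x)) (hxU : ∀ x, x ∈ U x) :
    ∃ t : Finset X, ∀ y, ∃ x ∈ t, y ∈ ordConnectedComponent (U x) x := by
  obtain ⟨t, ht⟩ := isCompact_univ.elim_finite_subcover _
    (fun x => (hU x).ordConnectedComponent x)
    (fun y _ => mem_iUnion.2 ⟨y, self_mem_ordConnectedComponent.2 (hxU y)⟩)
  exact ⟨t, fun y => by simpa using ht (mem_univ y)⟩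

section Constancy

variable {Z : Type*} [TopologicalSpace Z] [T1Space Z] {g : X → Z}

theorem isOpen_setOf_not_subsingleton_image_Icc_left (hg : Continuous g) (b : X) :
    IsOpen {x | ¬ (g '' Icc x b).Subsingleton} := by
  have witness : ∀ y z, y ≤ z → z ≤ b → g z ≠ g b → ¬ (g '' Icc y b).Subsingleton :=
    fun y z hyz hzb hz hs =>
      hz (hs (mem_image_of_mem g ⟨hyz, hzb⟩) (mem_image_of_mem g ⟨hyz.trans hzb, le_rfl⟩))
  refine isOpen_iff_mem_nhds.2 fun x hx => ?_
  have hxb : x ≤ b := not_lt.1 fun h => hx (by simp [Icc_eq_empty_of_lt h])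
  obtain ⟨z, ⟨hxz, hzb⟩, hz⟩ := exists_ne_of_not_subsingleton_image (right_mem_Icc.2 hxb) hx
  rcases hxz.lt_or_eq with hxz | rfl
  · exact Filter.mem_of_superset (Iio_mem_nhds hxz) fun y hy => witness y z hy.le hzb hz
  · have hxb : x < b := hzb.lt_of_ne fun h => hz (h ▸ rfl)
    exact Filter.mem_of_superset (Filter.inter_mem (Iio_mem_nhds hxb)
      ((isClosed_singleton.preimage hg).isOpen_compl.mem_nhds hz))
      fun y hy => witness y y le_rfl hy.1.le hy.2

theorem isOpen_setOf_not_subsingleton_image_Icc_right (hg : Continuous g) (a : X) :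
    IsOpen {x | ¬ (g '' Icc a x).Subsingleton} := by
  have dual := isOpen_setOf_not_subsingleton_image_Icc_left (X := Xᵒᵈ)
    (g := g ∘ OrderDual.ofDual) hg (OrderDual.toDual a)
  simp only [image_comp_ofDual_Icc, OrderDual.ofDual_toDual] at dual
  exact dual

end Constancy

theorem secondCountableTopology_of_countable_of_exists_between {D : Set X} (hD : D.Countable)
    (hl : ∀ a b, a < b → ∃ d ∈ D, a ≤ d ∧ d < b) (hr : ∀ a b, a < b → ∃ d ∈ D, a < d ∧ d ≤ b) :
    SecondCountableTopology X := by
  refine ⟨⟨Ioi '' D ∪ Iio '' D, (hD.image _).union (hD.image _), ?_⟩⟩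
  refine (OrderTopology.topology_eq_generate_intervals (α := X)).trans
    (le_antisymm (generateFrom_anti ?_) (le_generateFrom ?_))
  · simp only [union_subset_iff, image_subset_iff]
    exact ⟨fun a _ => ⟨a, .inl rfl⟩, fun a _ => ⟨a, .inr rfl⟩⟩
  let _ : TopologicalSpace X := generateFrom (Ioi '' D ∪ Iio '' D)
  rintro _ ⟨a, rfl | rfl⟩
  · have : Ioi a = ⋃ d ∈ D ∩ Ici a, Ioi d := by
      ext b
      simp only [mem_Ioi, mem_iUnion, mem_inter_iff, mem_Ici, exists_prop]
      exact ⟨fun hab => (hl a b hab).imp fun d ⟨hd, had, hdb⟩ => ⟨⟨hd, had⟩, hdb⟩,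
        fun ⟨d, ⟨_, had⟩, hdb⟩ => had.trans_lt hdb⟩
    rw [this]
    exact isOpen_biUnion fun d hd => .basic _ (.inl (mem_image_of_mem _ hd.1))
  · have : Iio a = ⋃ d ∈ D ∩ Iic a, Iio d := by
      ext b
      simp only [mem_Iio, mem_iUnion, mem_inter_iff, mem_Iic, exists_prop]
      exact ⟨fun hba => (hr b a hba).imp fun d ⟨hd, hbd, hda⟩ => ⟨⟨hd, hda⟩, hbd⟩,
        fun ⟨d, ⟨_, hda⟩, hbd⟩ => hbd.trans_le hda⟩
    rw [this]
    exact isOpen_biUnion fun d hd => .basic _ (.inr (mem_image_of_mem _ hd.1))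

variable [CompactSpace X]

/-- Disjoint closed sets of a compact LOTS meet only finitely many common fibres of a monotone
map: cover the space by finitely many convex open sets each missing `P₁` or `P₂`; two fibres
through the same pair of these convex sets would force one of them to meet both `P₁` and `P₂`. -/
theorem Monotone.finite_image_inter_image {Y : Type*} [LinearOrder Y] {f : X → Y}
    (hf : Monotone f) {P₁ P₂ : Set X} (h₁ : IsClosed P₁) (h₂ : IsClosed P₂)
    (hd : Disjoint P₁ P₂) : (f '' P₁ ∩ f '' P₂).Finite := by
  classical
  set U : X → Set X := fun x => if x ∈ P₁ then P₂ᶜ else P₁ᶜ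
  set V : X → Set X := fun x => ordConnectedComponent (U x) x
  have hU : ∀ x, IsOpen (U x) := fun x => by
    by_cases hx : x ∈ P₁ <;> simp [U, hx, h₁.isOpen_compl, h₂.isOpen_compl]
  have hxU : ∀ x, x ∈ U x := fun x => by
    by_cases hx : x ∈ P₁
    · simpa [U, hx] using hd.notMem_of_mem_left hx
    · simp [U, hx]
  have separating : ∀ x, ∀ p₁ ∈ P₁, ∀ p₂ ∈ P₂, p₁ ∈ V x → p₂ ∉ V x :=
    fun x p₁ hp₁ p₂ hp₂ h₁ h₂ => by
      by_cases hx : x ∈ P₁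
      · simpa [U, hx, hp₂] using ordConnectedComponent_subset h₂
      · simpa [U, hx, hp₁] using ordConnectedComponent_subset h₁
  obtain ⟨t, ht⟩ := exists_finset_forall_mem_ordConnectedComponent hU hxU
  set F : X × X → Set Y :=
    fun i => {q | ∃ p₁ ∈ P₁ ∩ V i.1, ∃ p₂ ∈ P₂ ∩ V i.2, f p₁ = q ∧ f p₂ = q}
  have no_lt : ∀ i, ∀ q ∈ F i, ∀ q' ∈ F i, ¬ q < q' := by
    rintro i _ ⟨p₁, ⟨hp₁, hV₁⟩, p₂, ⟨hp₂, hV₂⟩, rfl, hp⟩ _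
      ⟨q₁, ⟨-, hW₁⟩, q₂, ⟨-, hW₂⟩, rfl, hq⟩ hlt
    rcases hf.mem_or_mem_of_lt hV₁ hW₁ hV₂ hW₂ hp.symm hq.symm hlt with h | h
    · exact separating _ _ hp₁ _ hp₂ hV₁ h
    · exact separating _ _ hp₁ _ hp₂ h hV₂
  have hF : ∀ i, (F i).Subsingleton := fun i q hq q' hq' =>
    le_antisymm (not_lt.1 (no_lt i q' hq' q hq)) (not_lt.1 (no_lt i q hq q' hq'))
  refine ((t ×ˢ t).finite_toSet.biUnion fun i _ => (hF i).finite).subset ?_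
  rintro q ⟨⟨p₁, hp₁, rfl⟩, p₂, hp₂, hq⟩
  obtain ⟨x₁, hx₁, hV₁⟩ := ht p₁
  obtain ⟨x₂, hx₂, hV₂⟩ := ht p₂
  exact mem_biUnion (x := (x₁, x₂)) (Finset.mem_product.2 ⟨hx₁, hx₂⟩)
    ⟨p₁, ⟨hp₁, hV₁⟩, p₂, ⟨hp₂, hV₂⟩, rfl, hq⟩

theorem Monotone.isTightCard {Y : Type*} [LinearOrder Y] [TopologicalSpace Y] [T1Space Y]
    {f : X → Y} (hf : Monotone f) {κ : Cardinal} (hκ : 2 ≤ κ) : IsTightCard κ f := by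
  rintro ⟨Ps, ⟨hdisj, hclosed, Q, hQ, himage⟩, rfl⟩
  obtain ⟨⟨P₁, h₁⟩, ⟨P₂, h₂⟩, hne⟩ := Cardinal.two_le_iff.1 hκ
  have hfin := hf.finite_image_inter_image (hclosed P₁ h₁) (hclosed P₂ h₂)
    (hdisj h₁ h₂ fun h => hne (Subtype.ext h))
  rw [himage P₁ h₁, himage P₂ h₂, inter_self] at hfin
  exact hQ hfin.isScatteredSet

section SecondCountable

variable {Z : Type*} [MetricSpace Z] {h : X → Z}

theorem exists_countable_forall_lt_exists_mem_Ioc (hh : Continuous h)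
    (hnc : ∀ a b, a < b → ¬ (h '' Icc a b).Subsingleton) :
    ∃ D : Set X, D.Countable ∧ ∀ a b, a < b → ∃ d ∈ D, a < d ∧ d ≤ b := by
  set U : ℕ → X → Set X := fun n x => {y | dist (h y) (h x) < 1 / ((n : ℝ) + 1)}
  set V : ℕ → X → Set X := fun n x => ordConnectedComponent (U n x) x
  have hU : ∀ n x, IsOpen (U n x) := fun n x =>
    isOpen_lt (hh.dist continuous_const) continuous_const
  have hxU : ∀ n x, x ∈ U n x := fun n x => by
    simp only [U, mem_ofPred_eq, dist_self]
    positivity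
  choose t ht using fun n => exists_finset_forall_mem_ordConnectedComponent (hU n) (hxU n)
  refine ⟨⋃ n, ⋃ x ∈ t n, {d | IsLeast ((V n x)ᶜ ∩ Ici x) d},
    countable_iUnion fun n => (t n).countable_toSet.biUnion fun x _ =>
      Set.Subsingleton.countable fun _ h₁ _ h₂ => h₁.unique h₂, fun a b hab => ?_⟩
  obtain ⟨c, ⟨hac, hcb⟩, hc⟩ :=
    exists_ne_of_not_subsingleton_image (left_mem_Icc.2 hab.le) (hnc a b hab)
  have hac : a < c := hac.lt_of_ne fun h => hc (h ▸ rfl)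
  obtain ⟨n, hn⟩ := exists_nat_one_div_lt (half_pos (dist_pos.2 hc))
  obtain ⟨x, hxt, hax⟩ := ht n a
  have hcV : c ∉ V n x := fun hcx => by
    have h₁ : a ∈ U n x := ordConnectedComponent_subset hax
    have h₂ : c ∈ U n x := ordConnectedComponent_subset hcx
    simp only [U, mem_ofPred_eq] at h₁ h₂
    generalize 1 / ((n : ℝ) + 1) = ε at *
    linarith [dist_triangle_right (h c) (h a) (h x)]
  have hxV : x ∈ V n x := self_mem_ordConnectedComponent.2 (hxU n x)
  have hxc : x ≤ c := not_lt.1 fun hcx => hcV (Set.Icc_subset _ hax hxV ⟨hac.le, hcx.le⟩)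
  have hS : IsClosed ((V n x)ᶜ ∩ Ici x) :=
    ((hU n x).ordConnectedComponent x).isClosed_compl.inter isClosed_Ici
  obtain ⟨d, hd⟩ := hS.isCompact.exists_isLeast ⟨c, hcV, hxc⟩
  refine ⟨d, mem_iUnion.2 ⟨n, mem_iUnion₂.2 ⟨x, hxt, hd⟩⟩, ?_, (hd.2 ⟨hcV, hxc⟩).trans hcb⟩
  exact not_le.1 fun hda => hd.1.1 (Set.Icc_subset _ hxV hax ⟨hd.1.2, hda⟩)

theorem secondCountableTopology_of_not_subsingleton_image_Icc (hh : Continuous h)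
    (hnc : ∀ a b, a < b → ¬ (h '' Icc a b).Subsingleton) : SecondCountableTopology X := by
  obtain ⟨D₁, hD₁, h₁⟩ := exists_countable_forall_lt_exists_mem_Ioc hh hnc
  have : CompactSpace Xᵒᵈ := ‹CompactSpace X›
  obtain ⟨D₂, hD₂, h₂⟩ := exists_countable_forall_lt_exists_mem_Ioc (X := Xᵒᵈ)
    (h := h ∘ OrderDual.ofDual) hh fun a b hab => by
      rw [image_comp_ofDual_Icc]
      exact hnc _ _ hab
  refine secondCountableTopology_of_countable_of_exists_between
    (hD₁.union (hD₂.preimage OrderDual.toDual.injective)) (fun a b hab => ?_)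
    fun a b hab => (h₁ a b hab).imp fun d hd => ⟨.inl hd.1, hd.2⟩
  obtain ⟨d, hd, hbd, hda⟩ := h₂ (OrderDual.toDual b) (OrderDual.toDual a) hab
  exact ⟨OrderDual.ofDual d, .inr hd, hda, hbd⟩

end SecondCountable

end OrderTopology

section Collapse

variable {X Z : Type*} [LinearOrder X] {g : X → Z}

/-- `X` preordered by `x ≤ y` iff `g` is constant on `Icc y x`; its antisymmetrization
`Collapse g` identifies `x` and `y` iff `g` is constant between them. -/
def ConstPreorder (_g : X → Z) : Type _ := X

instance : Preorder (ConstPreorder g) where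
  le x y := (g '' Icc (α := X) y x).Subsingleton
  le_refl x := subsingleton_image_Icc_of_le (le_refl (α := X) x)
  le_trans _ _ _ hxy hyz := subsingleton_image_Icc_trans hyz hxy

instance : @Std.Total (ConstPreorder g) (· ≤ ·) :=
  ⟨fun x y => (le_total (α := X) x y).imp subsingleton_image_Icc_of_le
    subsingleton_image_Icc_of_le⟩

variable (g) in
def Collapse : Type _ := Antisymmetrization (ConstPreorder g) (· ≤ ·)

noncomputable instance : LinearOrder (Collapse g) := by
  classical exact inferInstanceAs (LinearOrder (Antisymmetrization (ConstPreorder g) (· ≤ ·)))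

noncomputable instance : TopologicalSpace (Collapse g) := Preorder.topology _

instance : OrderTopology (Collapse g) := ⟨rfl⟩

variable (g) in
noncomputable def collapse (x : X) : Collapse g :=
  toAntisymmetrization (α := ConstPreorder g) (· ≤ ·) x

theorem collapse_le_collapse {x y : X} :
    collapse g x ≤ collapse g y ↔ (g '' Icc y x).Subsingleton := Iff.rfl

theorem monotone_collapse : Monotone (collapse g) := fun _ _ h =>
  collapse_le_collapse.2 (subsingleton_image_Icc_of_le h)

theorem collapse_surjective : Function.Surjective (collapse g) := Quotient.mk_surjective

theorem finer_collapse : Finer (collapse g) g := fun x y h => by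
  rw [le_antisymm_iff, collapse_le_collapse, collapse_le_collapse] at h
  rcases le_total x y with hxy | hyx
  · exact h.2 (mem_image_of_mem g (left_mem_Icc.2 hxy)) (mem_image_of_mem g (right_mem_Icc.2 hxy))
  · exact h.1 (mem_image_of_mem g (right_mem_Icc.2 hyx)) (mem_image_of_mem g (left_mem_Icc.2 hyx))

variable [TopologicalSpace X] [OrderTopology X]

theorem continuous_collapse [TopologicalSpace Z] [T1Space Z] (hg : Continuous g) :
    Continuous (collapse g) := by
  refine OrderTopology.continuous_iff.2 fun a => ?_
  obtain ⟨b, rfl⟩ := collapse_surjective (g := g) a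
  simp only [preimage, mem_Ioi, mem_Iio, ← not_le, collapse_le_collapse]
  exact ⟨isOpen_setOf_not_subsingleton_image_Icc_right hg b,
    isOpen_setOf_not_subsingleton_image_Icc_left hg b⟩

variable [CompactSpace X]

theorem Collapse.compactSpace [TopologicalSpace Z] [T1Space Z] (hg : Continuous g) :
    CompactSpace (Collapse g) :=
  collapse_surjective.compactSpace (continuous_collapse hg)

theorem Collapse.secondCountableTopology [MetricSpace Z] (hg : Continuous g) :
    SecondCountableTopology (Collapse g) := by
  have := Collapse.compactSpace hg
  have hq : Topology.IsQuotientMap (collapse g) :=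
    (continuous_collapse hg).isClosedMap.isQuotientMap (continuous_collapse hg) collapse_surjective
  set g' := g ∘ Function.surjInv (collapse_surjective (g := g))
  have hcomp : g' ∘ collapse g = g :=
    funext fun x => finer_collapse _ _ (Function.surjInv_eq collapse_surjective (collapse g x))
  refine secondCountableTopology_of_not_subsingleton_image_Icc (h := g')
    (hq.continuous_iff.2 (by rwa [hcomp])) fun a b hab => ?_
  obtain ⟨x, rfl⟩ := collapse_surjective (g := g) a
  obtain ⟨y, rfl⟩ := collapse_surjective (g := g) b
  have hxy : ¬ (g '' Icc x y).Subsingleton := collapse_le_collapse.not.1 hab.not_ge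
  refine fun hs => hxy (hs.anti ?_)
  have : g '' Icc x y = g' '' (collapse g '' Icc x y) := by rw [← image_comp, hcomp]
  exact this ▸ image_mono monotone_collapse.image_Icc_subset

end Collapse

/-- Every compact LOTS is dissipated: every continuous map `g` from `X` to a compact
metrizable space is refined by a tight continuous map `f` from `X` to a compact
metrizable space. -/
theorem stmt9 (X : Type u)
    [LinearOrder X] [TopologicalSpace X] [OrderTopology X] [CompactSpace X] :
    IsDissipatedCard (2 : Cardinal.{u}) X := by
  intro Z _ _ _ g hg
  let _ := TopologicalSpace.metrizableSpaceMetric Z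
  have := Collapse.secondCountableTopology hg
  exact ⟨Collapse g, inferInstance, Collapse.compactSpace hg, inferInstance, collapse g,
    continuous_collapse hg, monotone_collapse.isTightCard le_rfl, finer_collapse⟩
end

section
/- Let κ be an ordinal, let X_α be a compact Hausdorff non-metrizable space for each α < κ, let M be a compact metrizable space, and let f : ∏_{α<κ} X_α → M be continuous. Then there are two-element sets E_α ⊆ X_α for each α < κ such that f is constant on ∏_{α<κ} E_α. -/
open Topology Filter Function

/-!
For each coordinate `α` there are `a ≠ b` in `X α` that `f` cannot tell apart, whatever the other
coordinates are: otherwise `a ↦ f (update · α a)` would be a continuous injection of the compact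
space `X α` into `C(∏ X, M)`, which is metrizable since `∏ X` is compact, so `X α` would be
metrizable. Choosing `E α = {a, b}`, two points of `∏ E` are joined by changing one coordinate
at a time; `f` is constant along every finite chain of such changes, hence by continuity on all
of `∏ E`.
-/

theorem ContinuousMap.metrizableSpace_of_forall_eq_imp_eq {X Y M : Type*}
    [TopologicalSpace X] [TopologicalSpace Y] [TopologicalSpace M]
    [CompactSpace X] [WeaklyLocallyCompactSpace Y] [SigmaCompactSpace Y]
    [TopologicalSpace.MetrizableSpace M] (F : C(X × Y, M))
    (hF : ∀ a b, (∀ y, F (a, y) = F (b, y)) → a = b) :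
    TopologicalSpace.MetrizableSpace X :=
  have hinj : Injective F.curry := fun a b hab => hF a b fun y => DFunLike.congr_fun hab y
  (F.curry.continuous.isClosedEmbedding hinj).isEmbedding.metrizableSpace

theorem exists_ne_forall_update_eq_of_not_metrizableSpace {ι M : Type*} [DecidableEq ι]
    {X : ι → Type*} [∀ i, TopologicalSpace (X i)] [∀ i, CompactSpace (X i)]
    [TopologicalSpace M] [TopologicalSpace.MetrizableSpace M]
    {f : (∀ i, X i) → M} (hf : Continuous f) (i : ι)
    (hi : ¬ TopologicalSpace.MetrizableSpace (X i)) :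
    ∃ a b : X i, a ≠ b ∧ ∀ w, f (update w i a) = f (update w i b) := by
  by_contra! h
  refine hi (ContinuousMap.metrizableSpace_of_forall_eq_imp_eq
    ⟨fun p : X i × (∀ j, X j) => f (update p.2 i p.1), by fun_prop⟩ fun a b hab => ?_)
  by_contra hne
  obtain ⟨w, hw⟩ := h a b hne
  exact hw (hab w)

theorem eq_of_forall_update_eq {ι M : Type*} [DecidableEq ι] {X : ι → Type*}
    [∀ i, TopologicalSpace (X i)] [TopologicalSpace M] [T2Space M]
    {f : (∀ i, X i) → M} (hf : Continuous f) {x y : ∀ i, X i}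
    (h : ∀ i w, f (update w i (x i)) = f (update w i (y i))) : f x = f y := by
  have hfin : ∀ s : Finset ι, f (s.piecewise y x) = f x := by
    intro s
    induction s using Finset.induction_on with
    | empty => rw [Finset.piecewise_empty]
    | insert i s hi ih =>
      rw [Finset.piecewise_insert, ← h,
        update_eq_self_iff.2 (Finset.piecewise_eq_of_notMem _ _ _ hi).symm, ih]
  have htend : Tendsto (fun s : Finset ι => s.piecewise y x) atTop (𝓝 y) :=
    tendsto_pi_nhds.2 fun i => tendsto_const_nhds.congr' <|
      (eventually_ge_atTop {i}).mono fun s hs =>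
        (Finset.piecewise_eq_of_mem _ _ _ (Finset.singleton_subset_iff.1 hs)).symm
  exact tendsto_nhds_unique ((tendsto_congr hfin).2 tendsto_const_nhds) ((hf.tendsto y).comp htend)

theorem stmt11_general (κ : Ordinal) (X : ↥(Set.Iio κ) → Type*)
    [∀ α, TopologicalSpace (X α)] [∀ α, CompactSpace (X α)]
    (hnm : ∀ α, ¬ TopologicalSpace.MetrizableSpace (X α))
    (M : Type*) [TopologicalSpace M] [TopologicalSpace.MetrizableSpace M]
    (f : (∀ α, X α) → M) (hf : Continuous f) :
    ∃ E : ∀ α, Set (X α),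
      (∀ α, ∃ a b : X α, a ≠ b ∧ E α = {a, b}) ∧
      ∀ x y : ∀ α, X α, (∀ α, x α ∈ E α) → (∀ α, y α ∈ E α) → f x = f y := by
  classical
  choose a b hab hf_ab using fun α =>
    exists_ne_forall_update_eq_of_not_metrizableSpace hf α (hnm α)
  refine ⟨fun α => {a α, b α}, fun α => ⟨a α, b α, hab α, rfl⟩, fun x y hx hy =>
    eq_of_forall_update_eq hf fun α w => ?_⟩
  have hxα : x α = a α ∨ x α = b α := hx α
  have hyα : y α = a α ∨ y α = b α := hy α
  rcases hxα with hxα | hxα <;> rcases hyα with hyα | hyα <;> simp [hxα, hyα, hf_ab]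

/-- If `X_α` is a compact Hausdorff non-metrizable space for each `α < κ` and
`f : ∏_{α<κ} X_α → M` is continuous with `M` compact metrizable, then there are
two-element sets `E_α ⊆ X_α` such that `f` is constant on `∏_{α<κ} E_α`. -/
theorem stmt11 (κ : Ordinal) (X : ↥(Set.Iio κ) → Type*)
    [∀ α, TopologicalSpace (X α)] [∀ α, CompactSpace (X α)] [∀ α, T2Space (X α)]
    (hnm : ∀ α, ¬ TopologicalSpace.MetrizableSpace (X α))
    (M : Type*) [TopologicalSpace M] [CompactSpace M] [TopologicalSpace.MetrizableSpace M]
    (f : (∀ α, X α) → M) (hf : Continuous f) :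
    ∃ E : ∀ α, Set (X α),
      (∀ α, ∃ a b : X α, a ≠ b ∧ E α = {a, b}) ∧
      ∀ x y : ∀ α, X α, (∀ α, x α ∈ E α) → (∀ α, y α ∈ E α) → f x = f y :=
  stmt11_general κ X hnm M f hf
end
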